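/- arXiv:1902.02283 — 9 statements merged into one kernel-verified Lean document; each statement's English description precedes it below -/
import Mathlib

section
/- Let A be an n×n real symmetric positive semidefinite matrix and let I, J be index sets of cardinality k. Then det(A(I,J))^2 ≤ det(A(I,I)) · det(A(J,J)), where A(I,J) denotes the submatrix of A with rows indexed by I and columns indexed by J. -/
/-!
Indexing the rows and columns of `A` by the disjoint union `I ⊕ J` exhibits the positive
semidefinite block matrix `[[P, B], [Bᵀ, Q]]` with `P = A(I,I)`, `B = A(I,J)`, `Q = A(J,J)`.
If `P` is singular, positivity forces `Bᵀ` to kill a kernel vector of `P`, so `det B = 0`.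
Otherwise the Schur complement `Q - Bᵀ P⁻¹ B` is positive semidefinite, and the determinant is
monotone on positive semidefinite matrices (`det (X + Cᵀ C) = det X * det (1 + C X⁻¹ Cᵀ) ≥ det X`),
so `det Q ≥ det (Bᵀ P⁻¹ B) = (det B)² / det P`.
-/

/-- The `k × k` submatrix of `A` with rows indexed by `I` and columns by `J`. -/
noncomputable def subm {n k : ℕ} (A : Matrix (Fin n) (Fin n) ℝ)
    (I J : Finset (Fin n)) (hI : I.card = k) (hJ : J.card = k) :
    Matrix (Fin k) (Fin k) ℝ :=
  A.submatrix (fun i => (I.orderIsoOfFin hI i : Fin n)) (fun j => (J.orderIsoOfFin hJ j : Fin n))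

namespace Matrix

theorem submatrix_sum_elim_sum_elim {α l m n o p q : Type*} (A : Matrix l m α)
    (r₁ : n → l) (r₂ : o → l) (c₁ : p → m) (c₂ : q → m) :
    A.submatrix (Sum.elim r₁ r₂) (Sum.elim c₁ c₂) =
      fromBlocks (A.submatrix r₁ c₁) (A.submatrix r₁ c₂) (A.submatrix r₂ c₁)
        (A.submatrix r₂ c₂) := by
  ext (i | i) (j | j) <;> rfl

variable {m n : Type*} [Fintype m] [Fintype n]

open scoped ComplexOrder in
theorem PosSemidef.conjTranspose_mulVec_eq_zero_of_fromBlocks {𝕜 : Type*} [RCLike 𝕜]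
    {P : Matrix m m 𝕜} {B : Matrix m n 𝕜} {Q : Matrix n n 𝕜}
    (hM : (fromBlocks P B Bᴴ Q).PosSemidef) {v : m → 𝕜} (hv : P *ᵥ v = 0) : Bᴴ *ᵥ v = 0 := by
  have hker : fromBlocks P B Bᴴ Q *ᵥ Sum.elim v 0 = 0 := by
    rw [← hM.dotProduct_mulVec_zero_iff]
    simp [fromBlocks_mulVec, hv, dotProduct]
  simpa [fromBlocks_mulVec] using congrArg (· ∘ Sum.inr) hker

variable [DecidableEq n]

theorem PosSemidef.one_le_det_one_add {Z : Matrix n n ℝ} (hZ : Z.PosSemidef) :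
    1 ≤ (1 + Z).det := by
  have hcfc : 1 + Z = cfc (fun x : ℝ => 1 + x) Z := by
    have : IsSelfAdjoint Z := hZ.1
    rw [cfc_add .., cfc_const_one .., cfc_id' ..]
  rw [hcfc, hZ.1.cfc_eq]
  simp only [IsHermitian.cfc, RCLike.ofReal_real_eq_id, CompTriple.comp_eq, det_map, det_diagonal,
    Function.comp_apply]
  exact Finset.one_le_prod fun i _ => by linarith [hZ.eigenvalues_nonneg i]

open scoped MatrixOrder in
theorem PosSemidef.det_le_det_add {X Y : Matrix n n ℝ} (hX : X.PosSemidef)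
    (hY : Y.PosSemidef) : X.det ≤ (X + Y).det := by
  rcases hX.det_nonneg.eq_or_lt with hX0 | hXpos
  · rw [← hX0]
    exact (hX.add hY).det_nonneg
  obtain ⟨B, rfl⟩ := CStarAlgebra.nonneg_iff_eq_star_mul_self.mp hY.nonneg
  rw [star_eq_conjTranspose, det_add_mul _ _ hXpos.ne'.isUnit]
  exact le_mul_of_one_le_right hXpos.le (hX.inv.mul_mul_conjTranspose_same B).one_le_det_one_add

theorem PosSemidef.det_sq_le_of_fromBlocks {P B Q : Matrix n n ℝ}
    (hM : (fromBlocks P B Bᴴ Q).PosSemidef) : B.det ^ 2 ≤ P.det * Q.det := by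
  have hP : P.PosSemidef := hM.submatrix Sum.inl
  by_cases hP0 : P.det = 0
  · obtain ⟨v, hv, hPv⟩ := exists_mulVec_eq_zero_iff.mpr hP0
    have hB0 : B.det = 0 := by
      rw [← det_transpose, ← conjTranspose_eq_transpose_of_trivial]
      exact exists_mulVec_eq_zero_iff.mp
        ⟨v, hv, hM.conjTranspose_mulVec_eq_zero_of_fromBlocks hPv⟩
    simp [hB0, hP0]
  have hPpos : 0 < P.det := hP.det_nonneg.lt_of_ne' hP0
  have := invertibleOfIsUnitDet P hPpos.ne'.isUnit
  have hS : (Q - Bᴴ * P⁻¹ * B).PosSemidef :=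
    (PosDef.fromBlocks₁₁ B Q (hP.posDef_iff_det_ne_zero.mpr hP0)).mp hM
  have hK : (Bᴴ * P⁻¹ * B).det = B.det ^ 2 / P.det := by
    rw [det_mul, det_mul, det_nonsing_inv, Ring.inverse_eq_inv',
      conjTranspose_eq_transpose_of_trivial, det_transpose]
    ring
  have hle := (hP.inv.conjTranspose_mul_mul_same B).det_le_det_add hS
  rwa [add_sub_cancel, hK, div_le_iff₀' hPpos] at hle

end Matrix

open Matrix

/-- For a symmetric positive semidefinite `A`,
`det(A(I,J))² ≤ det(A(I,I)) · det(A(J,J))`. -/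
theorem det_submatrix_sq_le_of_posSemidef {n k : ℕ} (A : Matrix (Fin n) (Fin n) ℝ)
    (hA : A.PosSemidef) (I J : Finset (Fin n)) (hI : I.card = k) (hJ : J.card = k) :
    (subm A I J hI hJ).det ^ 2 ≤ (subm A I I hI hI).det * (subm A J J hJ hJ).det := by
  set eI : Fin k → Fin n := fun i => I.orderIsoOfFin hI i
  set eJ : Fin k → Fin n := fun j => J.orderIsoOfFin hJ j
  have hJI : A.submatrix eJ eI = (subm A I J hI hJ)ᴴ := by
    rw [subm, conjTranspose_submatrix, hA.1.eq]
  have hM := hA.submatrix (Sum.elim eI eJ)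
  rw [submatrix_sum_elim_sum_elim, hJI] at hM
  exact hM.det_sq_le_of_fromBlocks
end

section
/- Let A be an n×n real symmetric positive semidefinite matrix and 1 ≤ k ≤ n. Then the maximum over all k×k submatrices A(I,J) of |det(A(I,J))| is attained by some principal submatrix A(I,I). -/
open Equiv

namespace Matrix

variable {ι m R : Type*} [Fintype m] [DecidableEq m]

theorem det_transpose_mul_eq_sum [Fintype ι] [CommRing R] (N M : Matrix ι m R) :
    (Nᵀ * M).det = ∑ p : m → ι, (∏ i, N (p i) i) * (M.submatrix p id).det := by
  have rows : (Nᵀ * M).det = detRowAlternating fun i => ∑ l, N l i • M.row l := by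
    congr 1; ext i j; simp [mul_apply]
  rw [rows, ← AlternatingMap.coe_multilinearMap, MultilinearMap.map_sum]
  refine Finset.sum_congr rfl fun p _ => ?_
  rw [MultilinearMap.map_smul_univ, smul_eq_mul]
  rfl

theorem det_submatrix_comp_perm [CommRing R] (M : Matrix ι m R) (p : m → ι) (σ : Perm m) :
    (M.submatrix (p ∘ σ) id).det = Perm.sign σ * (M.submatrix p id).det := by
  rw [← det_permute, submatrix_submatrix, Function.comp_id]

theorem factorial_card_mul_det_transpose_mul [Fintype ι] [CommRing R] (N M : Matrix ι m R) :
    (Fintype.card m).factorial * (Nᵀ * M).det =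
      ∑ p : m → ι, (N.submatrix p id).det * (M.submatrix p id).det := by
  have reindex : ∀ σ : Perm m, (Nᵀ * M).det =
      ∑ p : m → ι, (∏ i, N (p (σ i)) i) * (Perm.sign σ * (M.submatrix p id).det) := by
    intro σ
    rw [det_transpose_mul_eq_sum, ← (σ.symm.arrowCongr (Equiv.refl ι)).sum_comp]
    refine Finset.sum_congr rfl fun p _ => ?_
    exact congrArg _ (det_submatrix_comp_perm M p σ)
  calc (Fintype.card m).factorial * (Nᵀ * M).det
      = ∑ σ : Perm m, (Nᵀ * M).det := by simp [Fintype.card_perm]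
    _ = ∑ σ : Perm m, ∑ p : m → ι,
          (∏ i, N (p (σ i)) i) * (Perm.sign σ * (M.submatrix p id).det) :=
        Finset.sum_congr rfl fun σ _ => reindex σ
    _ = ∑ p : m → ι, (∑ σ : Perm m, Perm.sign σ * ∏ i, N (p (σ i)) i) *
          (M.submatrix p id).det := by
        rw [Finset.sum_comm]
        simp only [Finset.sum_mul]
        refine Finset.sum_congr rfl fun p _ => Finset.sum_congr rfl fun σ _ => by ring
    _ = ∑ p : m → ι, (N.submatrix p id).det * (M.submatrix p id).det := by
        refine Finset.sum_congr rfl fun p _ => ?_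
        rw [det_apply' (N.submatrix p id)]
        rfl

theorem det_transpose_mul_sq_le [Fintype ι] [CommRing R] [LinearOrder R] [IsStrictOrderedRing R]
    (N M : Matrix ι m R) : (Nᵀ * M).det ^ 2 ≤ (Nᵀ * N).det * (Mᵀ * M).det := by
  have hc : (0 : R) < ((Fintype.card m).factorial : R) ^ 2 := by positivity
  refine le_of_mul_le_mul_left ?_ hc
  calc ((Fintype.card m).factorial : R) ^ 2 * (Nᵀ * M).det ^ 2
      = (∑ p : m → ι, (N.submatrix p id).det * (M.submatrix p id).det) ^ 2 := by
        rw [← factorial_card_mul_det_transpose_mul]; ring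
    _ ≤ (∑ p : m → ι, (N.submatrix p id).det ^ 2) * ∑ p : m → ι, (M.submatrix p id).det ^ 2 :=
        Finset.sum_mul_sq_le_sq_mul_sq _ _ _
    _ = ((Fintype.card m).factorial : R) ^ 2 * ((Nᵀ * N).det * (Mᵀ * M).det) := by
        simp only [sq, ← factorial_card_mul_det_transpose_mul]; ring

open scoped MatrixOrder in
theorem PosSemidef.det_submatrix_sq_le [Fintype ι] {A : Matrix ι ι ℝ} (hA : A.PosSemidef)
    (e f : m → ι) : (A.submatrix e f).det ^ 2 ≤ (A.submatrix e e).det * (A.submatrix f f).det := by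
  classical
  set S := CFC.sqrt A
  have hS : Sᵀ * S = A := by
    rw [← conjTranspose_eq_transpose_of_trivial, ← star_eq_conjTranspose,
      (CFC.sqrt_nonneg A).isSelfAdjoint.star_eq, CFC.sqrt_mul_sqrt_self A hA.nonneg]
  have gram : ∀ e f : m → ι, A.submatrix e f = (S.submatrix id e)ᵀ * S.submatrix id f := by
    intro e f
    rw [← hS, submatrix_mul _ _ _ id _ Function.bijective_id, transpose_submatrix]
  simp only [gram]
  exact det_transpose_mul_sq_le _ _

end Matrix

theorem maxvol_principal_of_posSemidef_general {n k : ℕ} (A : Matrix (Fin n) (Fin n) ℝ)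
    (hA : A.PosSemidef) (hkn : k ≤ n) :
    ∃ (I : Finset (Fin n)) (hI : I.card = k),
      ∀ (I' J' : Finset (Fin n)) (hI' : I'.card = k) (hJ' : J'.card = k),
        |(subm A I' J' hI' hJ').det| ≤ |(subm A I I hI hI).det| := by
  have principal_nonneg : ∀ (I : Finset (Fin n)) (hI : I.card = k), 0 ≤ (subm A I I hI hI).det :=
    fun I hI => (hA.submatrix _).det_nonneg
  obtain ⟨I₀, -, hI₀⟩ := Finset.exists_subset_card_eq (s := (Finset.univ : Finset (Fin n)))
    (by simpa using hkn)
  have : Nonempty {I : Finset (Fin n) // I.card = k} := ⟨⟨I₀, hI₀⟩⟩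
  obtain ⟨⟨I, hI⟩, hmax⟩ := Finite.exists_max fun I : {I : Finset (Fin n) // I.card = k} =>
    (subm A I I I.2 I.2).det
  refine ⟨I, hI, fun I' J' hI' hJ' => ?_⟩
  rw [abs_of_nonneg (principal_nonneg I hI)]
  refine abs_le_of_sq_le_sq ?_ (principal_nonneg I hI)
  calc (subm A I' J' hI' hJ').det ^ 2
      ≤ (subm A I' I' hI' hI').det * (subm A J' J' hJ' hJ').det := hA.det_submatrix_sq_le _ _
    _ ≤ (subm A I I hI hI).det * (subm A I I hI hI).det :=
        mul_le_mul (hmax ⟨I', hI'⟩) (hmax ⟨J', hJ'⟩) (principal_nonneg J' hJ')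
          (principal_nonneg I hI)
    _ = (subm A I I hI hI).det ^ 2 := (sq _).symm

/-- For a symmetric positive semidefinite matrix, the maximum volume `k × k`
submatrix can be chosen to be a principal submatrix. -/
theorem maxvol_principal_of_posSemidef {n k : ℕ} (A : Matrix (Fin n) (Fin n) ℝ)
    (hA : A.PosSemidef) (hk1 : 1 ≤ k) (hkn : k ≤ n) :
    ∃ (I : Finset (Fin n)) (hI : I.card = k),
      ∀ (I' J' : Finset (Fin n)) (hI' : I'.card = k) (hJ' : J'.card = k),
        |(subm A I' J' hI' hJ').det| ≤ |(subm A I I hI hI).det| :=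
  maxvol_principal_of_posSemidef_general A hA hkn
end

section
/- Let A ∈ ℝ^{n×n} be row diagonally dominant and 1 ≤ k ≤ n. Then the maximum of |det(A(I,J))| over all k×k submatrices is attained by a principal submatrix A(I,I). -/
/-!
Row diagonal dominance survives a step of Gaussian elimination, and such a step changes no
minor whose rows contain the pivot row. Induct on `k`. If the row set of a `k × k` minor lies
in its column set, the minor is a principal one up to a permutation of its columns. Otherwise
choose a row `p` outside the column set, eliminate at `p` and expand along row `p`: every
`(k-1)`-minor is bounded by the principal minor of the eliminated matrix on the remaining rows,
and the entries of row `p` in the chosen columns have total modulus at most `|a_pp|`, the factor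
relating that principal minor to the principal minor of `A`. So every minor is dominated by the
principal minor on its rows, and a principal minor of largest modulus is a maximum.
-/

open Finset

theorem Function.exists_perm_eq_comp {α β : Type*} [Finite α] {f g : α → β} (hf : f.Injective)
    (h : ∀ a, f a ∈ Set.range g) : ∃ σ : Equiv.Perm α, f = g ∘ σ := by
  choose σ hσ using h
  have hσ_inj : σ.Injective := fun a b hab => hf (by rw [← hσ a, ← hσ b, hab])
  exact ⟨Equiv.ofBijective σ (Finite.injective_iff_bijective.1 hσ_inj), funext fun a => (hσ a).symm⟩

namespace Matrix

variable {ι K : Type*} [DecidableEq ι]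

section Field

variable [Field K]

/-- One step of Gaussian elimination with pivot `(p, p)`. -/
def pivotElim (A : Matrix ι ι K) (p : ι) : Matrix ι ι K :=
  of fun i j => if i = p then A i j else A i j - A i p / A p p * A p j

theorem pivotElim_apply_pivot_row (A : Matrix ι ι K) (p j : ι) : A.pivotElim p p j = A p j :=
  if_pos rfl

theorem pivotElim_apply_pivot_col {A : Matrix ι ι K} {p i : ι} (hp : A p p ≠ 0) (hi : i ≠ p) :
    A.pivotElim p i p = 0 := by
  simp [pivotElim, hi, div_mul_cancel₀ _ hp]

theorem det_submatrix_pivotElim {k : ℕ} (A : Matrix ι ι K) {p : ι} {f g : Fin k → ι} {r : Fin k}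
    (hr : f r = p) : ((A.pivotElim p).submatrix f g).det = (A.submatrix f g).det := by
  refine det_eq_of_forall_row_eq_smul_add_const
    (fun r' => if f r' = p then 0 else -(A (f r') p / A p p)) r (by simp [hr]) fun r' s => ?_
  by_cases h : f r' = p
  · simp [pivotElim, h]
  · simp [pivotElim, h, hr]
    ring

theorem det_submatrix_eq_mul_det_pivotElim {k : ℕ} {A : Matrix ι ι K} {p : ι} (hp : A p p ≠ 0)
    {f : Fin (k + 1) → ι} (hf : Function.Injective f) {r : Fin (k + 1)} (hr : f r = p) :
    (A.submatrix f f).det =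
      A p p * ((A.pivotElim p).submatrix (f ∘ r.succAbove) (f ∘ r.succAbove)).det := by
  rw [← det_submatrix_pivotElim A hr, det_succ_column _ r, Finset.sum_eq_single r]
  · simp [hr, pivotElim_apply_pivot_row, ← two_mul, submatrix_submatrix]
  · intro i _ hi
    rw [submatrix_apply, hr, pivotElim_apply_pivot_col hp (hf.ne_iff' hr |>.mpr hi), mul_zero,
      zero_mul]
  · simp

end Field

section NormedField

variable [Fintype ι] [NormedField K]

def IsRowDiagDominant (A : Matrix ι ι K) : Prop :=
  ∀ i, ∑ j ∈ univ.erase i, ‖A i j‖ ≤ ‖A i i‖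

theorem IsRowDiagDominant.sum_norm_le_of_notMem {A : Matrix ι ι K} (hA : A.IsRowDiagDominant)
    {p : ι} {s : Finset ι} (hs : p ∉ s) : ∑ j ∈ s, ‖A p j‖ ≤ ‖A p p‖ :=
  (sum_le_sum_of_subset_of_nonneg
    (fun j hj => mem_erase.2 ⟨ne_of_mem_of_not_mem hj hs, mem_univ j⟩)
    fun _ _ _ => norm_nonneg _).trans (hA p)

theorem IsRowDiagDominant.pivotElim {A : Matrix ι ι K} (hA : A.IsRowDiagDominant) (p : ι) :
    (A.pivotElim p).IsRowDiagDominant := by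
  intro i
  by_cases hi : i = p
  · subst hi
    simpa only [pivotElim_apply_pivot_row] using hA i
  by_cases hp : A p p = 0
  · -- `A i p / 0 = 0`, so row `i` is unchanged
    simpa [Matrix.pivotElim, hi, hp] using hA i
  set c := A i p / A p p
  have hc : ‖A i p‖ = ‖c‖ * ‖A p p‖ := by rw [← norm_mul, div_mul_cancel₀ _ hp]
  have hrow : ∀ j, A.pivotElim p i j = A i j - c * A p j := fun j => if_neg hi
  set T := (univ.erase i).erase p
  have hpi : p ∈ univ.erase i := mem_erase.2 ⟨Ne.symm hi, mem_univ p⟩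
  have hip : i ∈ univ.erase p := mem_erase.2 ⟨hi, mem_univ i⟩
  have hRi : ∑ j ∈ univ.erase i, ‖A i j‖ = ‖A i p‖ + ∑ j ∈ T, ‖A i j‖ :=
    (add_sum_erase _ _ hpi).symm
  have hRp : ∑ j ∈ univ.erase p, ‖A p j‖ = ‖A p i‖ + ∑ j ∈ T, ‖A p j‖ := by
    rw [← add_sum_erase _ _ hip, erase_right_comm]
  have hR' : ∑ j ∈ univ.erase i, ‖A.pivotElim p i j‖ = ∑ j ∈ T, ‖A.pivotElim p i j‖ := by
    rw [← add_sum_erase _ _ hpi, pivotElim_apply_pivot_col hp hi, norm_zero, zero_add]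
  have hT : ∑ j ∈ T, ‖A.pivotElim p i j‖ ≤ ∑ j ∈ T, ‖A i j‖ + ‖c‖ * ∑ j ∈ T, ‖A p j‖ := by
    rw [mul_sum, ← sum_add_distrib]
    refine sum_le_sum fun j _ => ?_
    rw [hrow j, ← norm_mul]
    exact norm_sub_le _ _
  have hdiag : ‖A i i‖ ≤ ‖A.pivotElim p i i‖ + ‖c‖ * ‖A p i‖ := by
    rw [hrow i, ← norm_mul]
    exact norm_le_norm_sub_add _ _
  -- Subtracting `c • (row p)` removes `‖A i p‖ = ‖c‖ ‖A p p‖` of off-diagonal mass from row `i`,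
  -- adds at most `‖c‖ (‖A p p‖ - ‖A p i‖)`, and lowers the diagonal by at most `‖c‖ ‖A p i‖`.
  have hAi := hA i
  have hAp := mul_le_mul_of_nonneg_left (hA p) (norm_nonneg c)
  rw [hRi] at hAi
  rw [hRp, mul_add] at hAp
  rw [hR']
  linarith

theorem norm_det_le_sum_norm_mul_norm_det_submatrix {k : ℕ}
    (M : Matrix (Fin (k + 1)) (Fin (k + 1)) K) (r : Fin (k + 1)) :
    ‖M.det‖ ≤ ∑ s, ‖M r s‖ * ‖(M.submatrix r.succAbove s.succAbove).det‖ := by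
  rw [det_succ_row M r]
  refine (norm_sum_le _ _).trans (sum_le_sum fun s _ => ?_)
  simp [norm_mul]

theorem IsRowDiagDominant.norm_det_submatrix_le {k : ℕ} {A : Matrix ι ι K}
    (hA : A.IsRowDiagDominant) {f g : Fin k → ι} (hf : f.Injective) (hg : g.Injective) :
    ‖(A.submatrix f g).det‖ ≤ ‖(A.submatrix f f).det‖ := by
  induction k generalizing A with
  | zero => simp [det_fin_zero]
  | succ k ih =>
    by_cases hrange : ∀ r, f r ∈ Set.range g
    · obtain ⟨σ, rfl⟩ := Function.exists_perm_eq_comp hf hrange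
      have hrows : A.submatrix (g ∘ σ) g = (A.submatrix g g).submatrix σ id := rfl
      have hprin : A.submatrix (g ∘ σ) (g ∘ σ) = (A.submatrix g g).submatrix σ σ := rfl
      rw [hrows, hprin, det_permute, det_submatrix_equiv_self]
      rcases Int.units_eq_one_or (Equiv.Perm.sign σ) with h | h <;> simp [h]
    obtain ⟨r, hr⟩ := not_forall.1 hrange
    set p := f r
    set B := A.pivotElim p
    set D := ‖(B.submatrix (f ∘ r.succAbove) (f ∘ r.succAbove)).det‖
    have hminor (s : Fin (k + 1)) :
        ‖((B.submatrix f g).submatrix r.succAbove s.succAbove).det‖ ≤ D := by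
      rw [submatrix_submatrix]
      exact ih (hA.pivotElim p) (hf.comp Fin.succAbove_right_injective)
        (hg.comp Fin.succAbove_right_injective)
    have hsum : ∑ s, ‖A p (g s)‖ ≤ ‖A p p‖ := by
      rw [← sum_image (f := fun j => ‖A p j‖) hg.injOn]
      exact hA.sum_norm_le_of_notMem (by simpa using hr)
    calc ‖(A.submatrix f g).det‖ = ‖(B.submatrix f g).det‖ := by
          rw [det_submatrix_pivotElim A rfl]
      _ ≤ ∑ s, ‖(B.submatrix f g) r s‖ *
            ‖((B.submatrix f g).submatrix r.succAbove s.succAbove).det‖ :=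
          norm_det_le_sum_norm_mul_norm_det_submatrix _ r
      _ ≤ ∑ s, ‖A p (g s)‖ * D := sum_le_sum fun s _ => by
          rw [submatrix_apply, show B (f r) (g s) = A p (g s) from pivotElim_apply_pivot_row ..]
          exact mul_le_mul_of_nonneg_left (hminor s) (norm_nonneg _)
      _ = (∑ s, ‖A p (g s)‖) * D := (sum_mul ..).symm
      _ ≤ ‖A p p‖ * D := mul_le_mul_of_nonneg_right hsum (norm_nonneg _)
      _ ≤ ‖(A.submatrix f f).det‖ := by
          by_cases hp : A p p = 0
          · simp [hp]
          · rw [det_submatrix_eq_mul_det_pivotElim hp hf rfl, norm_mul]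

end NormedField

end Matrix

theorem maxvol_principal_of_diagDominant_general {n k : ℕ} (A : Matrix (Fin n) (Fin n) ℝ)
    (hdd : ∀ i : Fin n, ∑ j ∈ Finset.univ.erase i, |A i j| ≤ |A i i|)
    (hkn : k ≤ n) :
    ∃ (I : Finset (Fin n)) (hI : I.card = k),
      ∀ (I' J' : Finset (Fin n)) (hI' : I'.card = k) (hJ' : J'.card = k),
        |(subm A I' J' hI' hJ').det| ≤ |(subm A I I hI hI).det| := by
  have hA : A.IsRowDiagDominant := fun i => by simpa only [Real.norm_eq_abs] using hdd i
  have hinj {I : Finset (Fin n)} (hI : I.card = k) :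
      Function.Injective fun i => (I.orderIsoOfFin hI i : Fin n) :=
    Subtype.val_injective.comp (I.orderIsoOfFin hI).injective
  obtain ⟨I, -, hI⟩ :=
    Finset.exists_subset_card_eq (s := (Finset.univ : Finset (Fin n))) (by simpa using hkn)
  have : Nonempty {I : Finset (Fin n) // I.card = k} := ⟨⟨I, hI⟩⟩
  obtain ⟨⟨I, hI⟩, hmax⟩ :=
    Finite.exists_max fun I : {I : Finset (Fin n) // I.card = k} => |(subm A I I I.2 I.2).det|
  refine ⟨I, hI, fun I' J' hI' hJ' => le_trans ?_ (hmax ⟨I', hI'⟩)⟩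
  simpa only [subm, Real.norm_eq_abs] using hA.norm_det_submatrix_le (hinj hI') (hinj hJ')

/-- For a row diagonally dominant matrix, the maximum volume `k × k` submatrix
can be chosen to be a principal submatrix. -/
theorem maxvol_principal_of_diagDominant {n k : ℕ} (A : Matrix (Fin n) (Fin n) ℝ)
    (hdd : ∀ i : Fin n, ∑ j ∈ Finset.univ.erase i, |A i j| ≤ |A i i|)
    (hk1 : 1 ≤ k) (hkn : k ≤ n) :
    ∃ (I : Finset (Fin n)) (hI : I.card = k),
      ∀ (I' J' : Finset (Fin n)) (hI' : I'.card = k) (hJ' : J'.card = k),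
        |(subm A I' J' hI' hJ').det| ≤ |(subm A I I hI hI).det| :=
  maxvol_principal_of_diagDominant_general A hdd hkn
end

section
/- Let A ∈ ℝ^{n×n} be strictly row diagonally dominant. Then A has an LU factorization A = LU where L is unit lower triangular and U is upper triangular and strictly row diagonally dominant. -/
/-!
Gaussian elimination without pivoting. Strict diagonal dominance makes the pivot `a = A 0 0`
nonzero, and it survives one elimination step: writing `A = [[a, r], [c, A']]`, the Schur
complement `A' - c r / a` is again strictly row diagonally dominant. Factoring it inductively as
`L' U'` gives `A = [[1, 0], [c / a, L']] * [[a, r], [0, U']]`, and the new first row of `U` is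
the first row of `A`, dominant by hypothesis.
-/

open Finset Matrix

namespace Fin

variable {M : Type*} [AddCommGroup M] {n : ℕ}

theorem sum_univ_erase_zero (f : Fin (n + 1) → M) :
    ∑ j ∈ univ.erase 0, f j = ∑ j : Fin n, f j.succ := by
  rw [sum_erase_eq_sub (mem_univ _), sum_univ_succ, add_sub_cancel_left]

theorem sum_univ_erase_succ (f : Fin (n + 1) → M) (i : Fin n) :
    ∑ j ∈ univ.erase i.succ, f j = f 0 + ∑ j ∈ univ.erase i, f j.succ := by
  rw [sum_erase_eq_sub (mem_univ _), sum_erase_eq_sub (mem_univ _), sum_univ_succ,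
    add_sub_assoc]

end Fin

namespace Matrix

section Bordered

variable {α : Type*} {n : ℕ}

/-- The block matrix `[[a, r], [c, M]]`. -/
def bordered (a : α) (r c : Fin n → α) (M : Matrix (Fin n) (Fin n) α) :
    Matrix (Fin (n + 1)) (Fin (n + 1)) α :=
  of fun i j => Fin.cases (Fin.cases a r j) (fun i' => Fin.cases (c i') (M i') j) i

variable (a : α) (r c : Fin n → α) (M : Matrix (Fin n) (Fin n) α)

@[simp] theorem bordered_zero_zero : bordered a r c M 0 0 = a := rfl
@[simp] theorem bordered_zero_succ (j : Fin n) : bordered a r c M 0 j.succ = r j := rfl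
@[simp] theorem bordered_succ_zero (i : Fin n) : bordered a r c M i.succ 0 = c i := rfl
@[simp] theorem bordered_succ_succ (i j : Fin n) :
    bordered a r c M i.succ j.succ = M i j := rfl

theorem eq_bordered (A : Matrix (Fin (n + 1)) (Fin (n + 1)) α) :
    A = bordered (A 0 0) (fun j => A 0 j.succ) (fun i => A i.succ 0)
      (A.submatrix Fin.succ Fin.succ) := by
  ext i j
  cases i using Fin.cases <;> cases j using Fin.cases <;> rfl

theorem bordered_apply_eq_zero_of_lt [Zero α] (hM : ∀ i j, i < j → M i j = 0) :
    ∀ i j, i < j → bordered a 0 c M i j = 0 := by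
  intro i j hij
  cases i using Fin.cases <;> cases j using Fin.cases
  · exact absurd hij (lt_irrefl 0)
  · rfl
  · exact absurd hij (Fin.succ_pos _).not_gt
  · exact hM _ _ (Fin.succ_lt_succ_iff.mp hij)

theorem bordered_apply_eq_zero_of_gt [Zero α] (hM : ∀ i j, j < i → M i j = 0) :
    ∀ i j, j < i → bordered a r 0 M i j = 0 := by
  intro i j hij
  cases i using Fin.cases <;> cases j using Fin.cases
  · exact absurd hij (lt_irrefl 0)
  · exact absurd hij (Fin.succ_pos _).not_gt
  · rfl
  · exact hM _ _ (Fin.succ_lt_succ_iff.mp hij)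

theorem bordered_mul_bordered [Semiring α] (b : α) (s d : Fin n → α)
    (N : Matrix (Fin n) (Fin n) α) :
    bordered a r c M * bordered b s d N =
      bordered (a * b + r ⬝ᵥ d) (a • s + r ᵥ* N) ((fun i => c i * b) + M *ᵥ d)
        (vecMulVec c s + M * N) := by
  ext i j
  cases i using Fin.cases <;> cases j using Fin.cases <;>
    simp [mul_apply, Fin.sum_univ_succ, dotProduct, vecMul, mulVec, vecMulVec]

end Bordered

section Elimination

variable {K : Type*} [DivisionRing K] {n : ℕ}

def firstSchurComplement (A : Matrix (Fin (n + 1)) (Fin (n + 1)) K) :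
    Matrix (Fin n) (Fin n) K :=
  A.submatrix Fin.succ Fin.succ - vecMulVec (fun i => A i.succ 0 / A 0 0) fun j => A 0 j.succ

theorem eq_bordered_mul_bordered_of_mul_eq_firstSchurComplement
    {A : Matrix (Fin (n + 1)) (Fin (n + 1)) K} (hA : A 0 0 ≠ 0)
    {L U : Matrix (Fin n) (Fin n) K} (hLU : L * U = A.firstSchurComplement) :
    A = bordered 1 0 (fun i => A i.succ 0 / A 0 0) L *
      bordered (A 0 0) (fun j => A 0 j.succ) 0 U := by
  rw [bordered_mul_bordered, hLU, firstSchurComplement]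
  conv_lhs => rw [eq_bordered A]
  congr 1 <;> simp [div_mul_cancel₀ _ hA]

end Elimination

section DiagDominant

variable {K : Type*} [AddCommGroup K] [LinearOrder K]

def StrictRowDiagDominant {ι : Type*} [Fintype ι] [DecidableEq ι] (A : Matrix ι ι K) : Prop :=
  ∀ i, ∑ j ∈ univ.erase i, |A i j| < |A i i|

namespace StrictRowDiagDominant

theorem diag_ne_zero [IsOrderedAddMonoid K] {ι : Type*} [Fintype ι] [DecidableEq ι]
    {A : Matrix ι ι K} (hA : A.StrictRowDiagDominant) (i : ι) : A i i ≠ 0 :=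
  abs_pos.mp ((sum_nonneg fun _ _ => abs_nonneg _).trans_lt (hA i))

theorem sum_abs_row_zero_lt {n : ℕ} {A : Matrix (Fin (n + 1)) (Fin (n + 1)) K}
    (hA : A.StrictRowDiagDominant) : ∑ j : Fin n, |A 0 j.succ| < |A 0 0| := by
  simpa only [Fin.sum_univ_erase_zero] using hA 0

end StrictRowDiagDominant

theorem strictRowDiagDominant_bordered [IsOrderedAddMonoid K] {n : ℕ} {a : K} {r : Fin n → K}
    {M : Matrix (Fin n) (Fin n) K} (hr : ∑ j, |r j| < |a|) (hM : M.StrictRowDiagDominant) :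
    (bordered a r 0 M).StrictRowDiagDominant := by
  intro i
  cases i using Fin.cases
  · simpa only [Fin.sum_univ_erase_zero, bordered_zero_zero, bordered_zero_succ] using hr
  · simpa only [Fin.sum_univ_erase_succ, bordered_succ_zero, bordered_succ_succ, Pi.zero_apply,
      abs_zero, zero_add] using hM _

end DiagDominant

section SchurDiagDominant

variable {K : Type*} [Field K] [LinearOrder K] [IsStrictOrderedRing K]

theorem StrictRowDiagDominant.firstSchurComplement {n : ℕ}
    {A : Matrix (Fin (n + 1)) (Fin (n + 1)) K} (hA : A.StrictRowDiagDominant) :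
    A.firstSchurComplement.StrictRowDiagDominant := by
  intro i
  set m := A i.succ 0 / A 0 0
  have hrow : |A i.succ 0| + ∑ j ∈ univ.erase i, |A i.succ j.succ| < |A i.succ i.succ| := by
    simpa only [Fin.sum_univ_erase_succ] using hA i.succ
  have hm : |m| * |A 0 0| = |A i.succ 0| := by
    rw [abs_div, div_mul_cancel₀ _ (abs_ne_zero.mpr (hA.diag_ne_zero 0))]
  have hpivotRow :
      |m| * ∑ j ∈ univ.erase i, |A 0 j.succ| ≤ |m| * |A 0 0| - |m| * |A 0 i.succ| := by
    rw [← mul_sub, sum_erase_eq_sub (f := fun j => |A 0 j.succ|) (mem_univ i)]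
    exact mul_le_mul_of_nonneg_left (by linarith [hA.sum_abs_row_zero_lt]) (abs_nonneg m)
  -- The pivot row's surplus `|A 0 0| - ∑ |A 0 j.succ|`, scaled by `|m|`, pays for the fill-in.
  calc ∑ j ∈ univ.erase i, |A.firstSchurComplement i j|
      ≤ ∑ j ∈ univ.erase i, (|A i.succ j.succ| + |m| * |A 0 j.succ|) := by
        refine sum_le_sum fun j _ => ?_
        rw [← abs_mul]
        exact abs_sub _ _
    _ = ∑ j ∈ univ.erase i, |A i.succ j.succ| + |m| * ∑ j ∈ univ.erase i, |A 0 j.succ| := by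
        rw [sum_add_distrib, mul_sum]
    _ < |A i.succ i.succ| - |m| * |A 0 i.succ| := by linarith
    _ ≤ |A.firstSchurComplement i i| := by
        rw [← abs_mul]
        exact abs_sub_abs_le_abs_sub _ _

end SchurDiagDominant

end Matrix

/-- A strictly row diagonally dominant matrix admits an LU factorization
`A = L * U` with `L` unit lower triangular and `U` upper triangular and
strictly row diagonally dominant. -/
theorem lu_of_strictDD {n : ℕ} (A : Matrix (Fin n) (Fin n) ℝ)
    (hdd : ∀ i : Fin n, ∑ j ∈ Finset.univ.erase i, |A i j| < |A i i|) :
    ∃ L U : Matrix (Fin n) (Fin n) ℝ,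
      (∀ i j : Fin n, i < j → L i j = 0) ∧ (∀ i : Fin n, L i i = 1) ∧
      (∀ i j : Fin n, j < i → U i j = 0) ∧
      (∀ i : Fin n, ∑ j ∈ Finset.univ.erase i, |U i j| < |U i i|) ∧
      A = L * U := by
  induction n with
  | zero => exact ⟨1, 1, nofun, nofun, nofun, nofun, Subsingleton.elim _ _⟩
  | succ n ih =>
    have hA : A.StrictRowDiagDominant := hdd
    obtain ⟨L, U, hL, hL_diag, hU, hU_dd, hLU⟩ := ih _ hA.firstSchurComplement
    refine ⟨bordered 1 0 (fun i => A i.succ 0 / A 0 0) L,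
      bordered (A 0 0) (fun j => A 0 j.succ) 0 U,
      bordered_apply_eq_zero_of_lt _ _ _ hL, fun i => ?_, bordered_apply_eq_zero_of_gt _ _ _ hU,
      strictRowDiagDominant_bordered hA.sum_abs_row_zero_lt hU_dd,
      eq_bordered_mul_bordered_of_mul_eq_firstSchurComplement (hA.diag_ne_zero 0) hLU.symm⟩
    cases i using Fin.cases
    · rfl
    · exact hL_diag _
end

section
/- Let U ∈ ℝ^{n×n} be a unit upper triangular row diagonally dominant matrix (ones on the diagonal and ∑_{j>i} |u_{ij}| ≤ 1 for all i). Then every entry of U^{-1} has absolute value at most 1, and consequently the spectral norm of U^{-1} is at most √(n(n+1)/2) ≤ n. -/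
open Finset

/-- Gauss-type sum: `∑_{i<n} (n-i) = n(n+1)/2` (doubled form in ℕ). -/
lemma gaussAux (n : ℕ) : (∑ i ∈ Finset.range n, (n - i)) * 2 = n * (n + 1) := by
  have h1 : ∑ i ∈ Finset.range n, (n - i) = ∑ i ∈ Finset.range n, (i + 1) := by
    rw [← Finset.sum_range_reflect (fun i => n - i) n]
    refine Finset.sum_congr rfl fun i hi => ?_
    simp only [Finset.mem_range] at hi
    omega
  have h2 := Finset.sum_range_id_mul_two (n + 1)
  have h3 := Finset.sum_range_succ' (fun i => i) n
  simp only [add_zero] at h3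
  rw [h1, ← h3, h2, Nat.add_sub_cancel, Nat.mul_comm]

/-- The spectral norm (largest singular value) of a real matrix, as the
operator norm of the induced map between Euclidean spaces. -/
noncomputable def specNorm {n m : ℕ} (A : Matrix (Fin n) (Fin m) ℝ) : ℝ :=
  ‖LinearMap.toContinuousLinearMap (Matrix.toEuclideanLin A)‖

/-- For a unit upper triangular row diagonally dominant matrix `U`, every entry
of `U⁻¹` has absolute value at most 1, and consequently
`‖U⁻¹‖ ≤ √(n(n+1)/2) ≤ n`. -/
theorem inv_unit_upperTriangular_DD_bound {n : ℕ} (U : Matrix (Fin n) (Fin n) ℝ)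
    (htri : ∀ i j : Fin n, j < i → U i j = 0)
    (hdiag : ∀ i : Fin n, U i i = 1)
    (hdd : ∀ i : Fin n, ∑ j ∈ Finset.univ.erase i, |U i j| ≤ 1) :
    (∀ i j : Fin n, |U⁻¹ i j| ≤ 1) ∧
    specNorm U⁻¹ ≤ Real.sqrt (n * (n + 1) / 2) ∧
    Real.sqrt (n * (n + 1) / 2) ≤ n := by
  have hbt : U.BlockTriangular id := fun i j h => htri i j h
  have hdet : U.det = 1 := by
    rw [Matrix.det_of_upperTriangular hbt]
    simp [hdiag]
  have hunit : IsUnit U.det := by rw [hdet]; exact isUnit_one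
  haveI : Invertible U := U.invertibleOfIsUnitDet hunit
  have hVbt : U⁻¹.BlockTriangular id := Matrix.blockTriangular_inv_of_blockTriangular hbt
  have hUV : U * U⁻¹ = 1 := Matrix.mul_nonsing_inv U hunit
  have hentry : ∀ i j : Fin n, U⁻¹ i j + ∑ k ∈ Finset.univ.erase i, U i k * U⁻¹ k j
      = (1 : Matrix (Fin n) (Fin n) ℝ) i j := by
    intro i j
    have h := congrFun (congrFun hUV i) j
    rw [Matrix.mul_apply] at h
    rw [← h, ← Finset.add_sum_erase _ _ (Finset.mem_univ i), hdiag, one_mul]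
  have key : ∀ d : ℕ, ∀ i : Fin n, n - (i : ℕ) = d → ∀ j : Fin n, |U⁻¹ i j| ≤ 1 := by
    intro d
    induction d using Nat.strong_induction_on with
    | _ d ih =>
      intro i hd j
      rcases lt_trichotomy j i with hji | hji | hji
      · rw [hVbt hji]; simp
      · subst hji
        have h0 : ∑ k ∈ Finset.univ.erase j, U j k * U⁻¹ k j = 0 := by
          apply Finset.sum_eq_zero
          intro k hk
          rcases lt_or_gt_of_ne (Finset.ne_of_mem_erase hk) with h | h
          · rw [htri j k h, zero_mul]
          · rw [hVbt h, mul_zero]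
        have h := hentry j j
        rw [h0, add_zero, Matrix.one_apply_eq] at h
        rw [h]; norm_num
      · have h := hentry i j
        rw [Matrix.one_apply_ne (ne_of_lt hji)] at h
        have hV : U⁻¹ i j = -∑ k ∈ Finset.univ.erase i, U i k * U⁻¹ k j := by linarith
        rw [hV, abs_neg]
        calc |∑ k ∈ Finset.univ.erase i, U i k * U⁻¹ k j|
            ≤ ∑ k ∈ Finset.univ.erase i, |U i k * U⁻¹ k j| :=
              Finset.abs_sum_le_sum_abs _ _
          _ ≤ ∑ k ∈ Finset.univ.erase i, |U i k| := by
              apply Finset.sum_le_sum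
              intro k hk
              rw [abs_mul]
              rcases lt_or_gt_of_ne (Finset.ne_of_mem_erase hk) with h' | h'
              · rw [htri i k h']; simp
              · have hik : (i : ℕ) < (k : ℕ) := h'
                have hkn : (k : ℕ) < n := k.isLt
                have hk' : n - (k : ℕ) < d := by omega
                have hb := ih _ hk' k rfl j
                nlinarith [abs_nonneg (U i k)]
          _ ≤ 1 := hdd i
  have hent : ∀ i j : Fin n, |U⁻¹ i j| ≤ 1 := fun i j => key (n - i) i rfl j
  -- bound on the sum of squares
  set Snat : ℕ := ∑ i ∈ Finset.range n, (n - i) with hSnat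
  have hrow : ∀ i : Fin n, ∑ j : Fin n, (U⁻¹ i j) ^ 2 ≤ ((n - (i : ℕ) : ℕ) : ℝ) := by
    intro i
    have h1 : ∑ j : Fin n, (U⁻¹ i j) ^ 2
        ≤ ∑ j : Fin n, (if i ≤ j then (1 : ℝ) else 0) := by
      apply Finset.sum_le_sum
      intro j _
      split_ifs with hij
      · have := hent i j
        nlinarith [abs_nonneg (U⁻¹ i j), sq_abs (U⁻¹ i j)]
      · have hji : j < i := lt_of_not_ge hij
        rw [hVbt hji]
        norm_num
    have h2 : ∑ j : Fin n, (if i ≤ j then (1 : ℝ) else 0)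
        = ((n - (i : ℕ) : ℕ) : ℝ) := by
      rw [Finset.sum_boole]
      have : Finset.univ.filter (fun j : Fin n => i ≤ j) = Finset.Ici i := by
        ext j; simp
      rw [this, Fin.card_Ici]
    linarith
  have hSsum : ∑ i : Fin n, ∑ j : Fin n, (U⁻¹ i j) ^ 2 ≤ (Snat : ℝ) := by
    have : (Snat : ℝ) = ∑ i : Fin n, ((n - (i : ℕ) : ℕ) : ℝ) := by
      rw [hSnat, Nat.cast_sum, Fin.sum_univ_eq_sum_range (fun k => ((n - k : ℕ) : ℝ)) n]
    rw [this]
    exact Finset.sum_le_sum fun i _ => hrow i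
  have hSval : (Snat : ℝ) = (n : ℝ) * (n + 1) / 2 := by
    have := gaussAux n
    have hc : ((Snat * 2 : ℕ) : ℝ) = ((n * (n + 1) : ℕ) : ℝ) := by
      rw [hSnat]; exact_mod_cast congrArg (Nat.cast : ℕ → ℝ) this
    push_cast at hc
    linarith
  have hSle : ∑ i : Fin n, ∑ j : Fin n, (U⁻¹ i j) ^ 2 ≤ (n : ℝ) * (n + 1) / 2 := by
    rw [← hSval]; exact hSsum
  have hCnonneg : (0 : ℝ) ≤ (n : ℝ) * (n + 1) / 2 := by positivity
  constructor
  · exact hent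
  constructor
  · unfold specNorm
    apply ContinuousLinearMap.opNorm_le_bound _ (Real.sqrt_nonneg _)
    intro x
    rw [LinearMap.coe_toContinuousLinearMap']
    set y := Matrix.toEuclideanLin U⁻¹ x with hy
    have hyi : ∀ i : Fin n, y i = ∑ j : Fin n, U⁻¹ i j * x j := by
      intro i
      rfl
    have hxsq : ∑ j : Fin n, (x j) ^ 2 = ‖x‖ ^ 2 := by
      rw [EuclideanSpace.norm_eq, Real.sq_sqrt (by positivity)]
      apply Finset.sum_congr rfl
      intro j _
      rw [Real.norm_eq_abs, sq_abs]
    have hy2 : ‖y‖ ^ 2 ≤ ((n : ℝ) * (n + 1) / 2) * ‖x‖ ^ 2 := by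
      rw [EuclideanSpace.norm_eq, Real.sq_sqrt (by positivity)]
      have step : ∑ i : Fin n, ‖y i‖ ^ 2
          ≤ ∑ i : Fin n, (∑ j : Fin n, (U⁻¹ i j) ^ 2) * (∑ j : Fin n, (x j) ^ 2) := by
        apply Finset.sum_le_sum
        intro i _
        rw [Real.norm_eq_abs, sq_abs, hyi i]
        exact Finset.sum_mul_sq_le_sq_mul_sq _ _ _
      rw [← Finset.sum_mul] at step
      calc ∑ i : Fin n, ‖y i‖ ^ 2
          ≤ (∑ i : Fin n, ∑ j : Fin n, (U⁻¹ i j) ^ 2) * (∑ j : Fin n, (x j) ^ 2) := step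
        _ ≤ ((n : ℝ) * (n + 1) / 2) * ‖x‖ ^ 2 := by
            rw [hxsq]
            apply mul_le_mul_of_nonneg_right hSle
            positivity
    calc ‖y‖ = Real.sqrt (‖y‖ ^ 2) := (Real.sqrt_sq (norm_nonneg y)).symm
      _ ≤ Real.sqrt (((n : ℝ) * (n + 1) / 2) * ‖x‖ ^ 2) := Real.sqrt_le_sqrt hy2
      _ = Real.sqrt ((n : ℝ) * (n + 1) / 2) * ‖x‖ := by
          rw [Real.sqrt_mul hCnonneg, Real.sqrt_sq (norm_nonneg x)]
  · have hn : (n : ℝ) ≤ (n : ℝ) ^ 2 := by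
      exact_mod_cast Nat.le_self_pow two_ne_zero n
    have h : (n : ℝ) * (n + 1) / 2 ≤ (n : ℝ) ^ 2 := by nlinarith
    calc Real.sqrt ((n : ℝ) * (n + 1) / 2)
        ≤ Real.sqrt ((n : ℝ) ^ 2) := Real.sqrt_le_sqrt h
      _ = n := Real.sqrt_sq (Nat.cast_nonneg n)
end

section
/- Let L ∈ ℝ^{m×m} be lower triangular such that for each column j, the diagonal entry l_{jj} has the largest absolute value in that column (|l_{ij}| ≤ |l_{jj}| for all i ≥ j). Then the spectral norm of L^{-1} satisfies ‖L^{-1}‖ ≤ 2^{m-1} / min_j |l_{jj}|. -/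
/-!
Let `M = L⁻¹`. Below the diagonal, entry `(i, j)` of `M * L = 1` together with
`|L k j| ≤ |L j j|` gives `|M i j| ≤ ∑_{j < k ≤ i} |M i k|`, so the suffix sums of row `i` of `|M|`
at most double at each step to the left and `|M i j| ≤ 2 ^ (i - j - 1) * |M i i|`, where
`|M i i| = 1 / |L i i|`. Summing these geometric bounds, every row sum and every column sum of `|M|`
is at most `2 ^ (m - 1) / min_j |L j j|`, and the Schur test `‖M‖₂ ≤ √(‖M‖₁ ‖M‖_∞)` concludes.
-/

open Finset

theorem specNorm_le_sqrt_mul {n m : ℕ} {A : Matrix (Fin n) (Fin m) ℝ} {R C : ℝ} (hR : 0 ≤ R)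
    (hrow : ∀ i, ∑ j, |A i j| ≤ R) (hcol : ∀ j, ∑ i, |A i j| ≤ C) : specNorm A ≤ √(R * C) := by
  refine ContinuousLinearMap.opNorm_le_bound _ (Real.sqrt_nonneg _) fun x => ?_
  -- Cauchy–Schwarz with weights `|A i j|`
  have hrow_sq (i : Fin n) : (∑ j, A i j * x j) ^ 2 ≤ R * ∑ j, |A i j| * x j ^ 2 := by
    refine (sum_sq_le_sum_mul_sum_of_sq_le_mul _ (f := fun j => |A i j|)
      (g := fun j => |A i j| * x j ^ 2) (fun j _ => abs_nonneg _) (fun j _ => by positivity)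
      fun j _ => (by rw [mul_pow, ← mul_assoc, abs_mul_abs_self, sq])).trans ?_
    gcongr
    exact hrow i
  have hsq : ‖Matrix.toEuclideanLin A x‖ ^ 2 ≤ R * C * ‖x‖ ^ 2 := calc
    ‖Matrix.toEuclideanLin A x‖ ^ 2 = ∑ i, (∑ j, A i j * x j) ^ 2 := by
      simp [EuclideanSpace.norm_sq_eq, Matrix.toLpLin_apply, Matrix.mulVec, dotProduct]
    _ ≤ ∑ i, R * ∑ j, |A i j| * x j ^ 2 := sum_le_sum fun i _ => hrow_sq i
    _ = R * ∑ j, (∑ i, |A i j|) * x j ^ 2 := by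
      rw [← mul_sum, sum_comm]
      simp_rw [sum_mul]
    _ ≤ R * ∑ j, C * x j ^ 2 := by
      gcongr with j
      exact hcol j
    _ = R * C * ‖x‖ ^ 2 := by
      simp [EuclideanSpace.norm_sq_eq, mul_sum, mul_assoc]
  rw [← Real.sqrt_sq (norm_nonneg x), ← Real.sqrt_mul' _ (sq_nonneg _)]
  exact Real.le_sqrt_of_sq_le hsq

section SuffixSums

variable {α 𝕜 : Type*} [LinearOrder α] [LocallyFiniteOrder α] [PredOrder α]
  [Field 𝕜] [LinearOrder 𝕜] [IsStrictOrderedRing 𝕜] {f : α → 𝕜} {i : α}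

theorem sum_Icc_le_two_pow_card_Ioc_mul (hf : ∀ j < i, f j ≤ ∑ k ∈ Ioc j i, f k) {j : α}
    (hj : j ≤ i) : ∑ k ∈ Icc j i, f k ≤ 2 ^ #(Ioc j i) * f i := by
  induction hj using Pred.rec with
  | rfl => simp
  | pred j hj ih =>
    by_cases hmin : IsMin j
    · rwa [hmin.pred_eq]
    have hlt : Order.pred j < j := Order.pred_lt_of_not_isMin hmin
    have hcard : #(Icc j i) = #(Ioc j i) + 1 := by
      rw [← Ioc_insert_left hj, card_insert_of_notMem left_notMem_Ioc]
    have hstep := hf _ (hlt.trans_le hj)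
    rw [Ioc_pred_left_eq_Icc_of_not_isMin hmin] at hstep ⊢
    rw [← insert_Icc_left_eq_Icc_pred (hlt.le.trans hj),
      sum_insert fun h => (mem_Icc.mp h).1.not_gt hlt, hcard, pow_succ]
    linarith

theorem le_two_pow_card_Ioo_mul (hf : ∀ j < i, f j ≤ ∑ k ∈ Ioc j i, f k) {j : α} (hji : j < i) :
    f j ≤ 2 ^ #(Ioo j i) * f i := by
  have hsum := sum_Icc_le_two_pow_card_Ioc_mul hf hji.le
  rw [← Ioc_insert_left hji.le, sum_insert left_notMem_Ioc, ← Ioo_insert_right hji,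
    card_insert_of_notMem right_notMem_Ioo, pow_succ, Ioo_insert_right hji] at hsum
  linarith [hf j hji]

end SuffixSums

theorem Nat.sum_two_pow_lt_of_injOn {ι : Type*} {s : Finset ι} {g : ι → ℕ} {n : ℕ}
    (hg : Set.InjOn g s) (hlt : ∀ x ∈ s, g x < n) : ∑ x ∈ s, 2 ^ g x < 2 ^ n := by
  classical
  rw [← sum_image hg]
  exact Nat.geomSum_lt le_rfl fun k hk => by
    obtain ⟨x, hx, rfl⟩ := mem_image.mp hk
    exact hlt x hx

namespace Matrix

section Triangular

variable {ι : Type*} [LinearOrder ι]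

theorem IsLowerTriangular.apply_eq_zero_of_lt {R : Type*} [Zero R] {M : Matrix ι ι R}
    (hM : M.IsLowerTriangular) {i j : ι} (hij : i < j) : M i j = 0 :=
  hM hij

variable [Fintype ι]

theorem IsLowerTriangular.mul_apply_eq_sum_Icc [LocallyFiniteOrder ι] {R : Type*}
    [NonUnitalNonAssocSemiring R] {A B : Matrix ι ι R} (hA : A.IsLowerTriangular)
    (hB : B.IsLowerTriangular) (i j : ι) : (A * B) i j = ∑ k ∈ Icc j i, A i k * B k j := by
  rw [mul_apply]
  refine (sum_subset (subset_univ _) fun k _ hk => ?_).symm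
  rcases not_and_or.mp (mem_Icc.not.mp hk) with h | h
  · rw [hB.apply_eq_zero_of_lt (not_le.mp h), mul_zero]
  · rw [hA.apply_eq_zero_of_lt (not_le.mp h), zero_mul]

theorem IsLowerTriangular.inv [DecidableEq ι] {R : Type*} [CommRing R] {L : Matrix ι ι R}
    (hL : L.IsLowerTriangular) (hdet : IsUnit L.det) : L⁻¹.IsLowerTriangular :=
  have := L.invertibleOfIsUnitDet hdet
  blockTriangular_inv_of_blockTriangular hL

variable [DecidableEq ι] {𝕜 : Type*} [Field 𝕜] {L : Matrix ι ι 𝕜}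

theorem IsLowerTriangular.apply_self_ne_zero (hL : L.IsLowerTriangular) (hdet : IsUnit L.det)
    (i : ι) : L i i ≠ 0 := by
  rw [det_of_isLowerTriangular L hL, isUnit_iff_ne_zero, prod_ne_zero_iff] at hdet
  exact hdet i (mem_univ i)

variable [LocallyFiniteOrder ι]

theorem IsLowerTriangular.inv_apply_self (hL : L.IsLowerTriangular) (hdet : IsUnit L.det)
    (i : ι) : L⁻¹ i i = (L i i)⁻¹ := by
  have h := (hL.inv hdet).mul_apply_eq_sum_Icc hL i i
  rw [nonsing_inv_mul L hdet, Icc_self, sum_singleton, one_apply_eq] at h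
  exact eq_inv_of_mul_eq_one_left h.symm

theorem IsLowerTriangular.abs_inv_apply_le_sum_Ioc [LinearOrder 𝕜] [IsStrictOrderedRing 𝕜]
    (hL : L.IsLowerTriangular) (hdet : IsUnit L.det) {j : ι}
    (hcol : ∀ k, j ≤ k → |L k j| ≤ |L j j|) {i : ι} (hji : j < i) :
    |L⁻¹ i j| ≤ ∑ k ∈ Ioc j i, |L⁻¹ i k| := by
  have h := (hL.inv hdet).mul_apply_eq_sum_Icc hL i j
  rw [nonsing_inv_mul L hdet, one_apply_ne hji.ne', ← Ioc_insert_left hji.le,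
    sum_insert left_notMem_Ioc] at h
  have hsolve : L⁻¹ i j * L j j = -∑ k ∈ Ioc j i, L⁻¹ i k * L k j := by linear_combination -h
  refine le_of_mul_le_mul_right ?_ (abs_pos.mpr (hL.apply_self_ne_zero hdet j))
  calc |L⁻¹ i j| * |L j j| = |∑ k ∈ Ioc j i, L⁻¹ i k * L k j| := by
        rw [← abs_mul, hsolve, abs_neg]
    _ ≤ ∑ k ∈ Ioc j i, |L⁻¹ i k| * |L k j| :=
        (abs_sum_le_sum_abs _ _).trans_eq (sum_congr rfl fun k _ => abs_mul _ _)
    _ ≤ ∑ k ∈ Ioc j i, |L⁻¹ i k| * |L j j| := sum_le_sum fun k hk =>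
        mul_le_mul_of_nonneg_left (hcol k (mem_Ioc.mp hk).1.le) (abs_nonneg _)
    _ = (∑ k ∈ Ioc j i, |L⁻¹ i k|) * |L j j| := (sum_mul ..).symm

end Triangular

section GeometricBounds

variable {𝕜 : Type*} [Field 𝕜] [LinearOrder 𝕜] [IsStrictOrderedRing 𝕜] {m : ℕ}
  {M : Matrix (Fin m) (Fin m) 𝕜} {c : 𝕜}

theorem IsLowerTriangular.sum_abs_row_le_two_pow_mul (hM : M.IsLowerTriangular)
    (hdiag : ∀ i, |M i i| ≤ c) (hoff : ∀ i j, j < i → |M i j| ≤ 2 ^ (i - j - 1 : ℕ) * c)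
    (i : Fin m) :
    ∑ j, |M i j| ≤ 2 ^ (m - 1) * c := by
  have hc : 0 ≤ c := (abs_nonneg _).trans (hdiag i)
  have hgeom : (1 + ∑ j ∈ Iio i, 2 ^ (i - j - 1 : ℕ) : 𝕜) ≤ 2 ^ (m - 1) := by
    have := Nat.sum_two_pow_lt_of_injOn (s := Iio i) (g := fun j => i - j - 1) (n := m - 1)
      (fun a ha b hb hab => by simp only [coe_Iio, Set.mem_Iio] at ha hb hab; omega)
      (fun j hj => by have := (mem_Iio.mp hj); omega)
    exact_mod_cast (add_comm _ _).trans_le this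
  calc ∑ j, |M i j| = ∑ j ∈ Iic i, |M i j| := by
        refine (sum_subset (subset_univ _) fun j _ hj => ?_).symm
        rw [hM.apply_eq_zero_of_lt (not_le.mp (mem_Iic.not.mp hj)), abs_zero]
    _ = |M i i| + ∑ j ∈ Iio i, |M i j| := by rw [← Iio_insert, sum_insert notMem_Iio_self]
    _ ≤ c + ∑ j ∈ Iio i, 2 ^ (i - j - 1 : ℕ) * c :=
        add_le_add (hdiag i) (sum_le_sum fun j hj => hoff i j (mem_Iio.mp hj))
    _ = (1 + ∑ j ∈ Iio i, 2 ^ (i - j - 1 : ℕ)) * c := by rw [add_mul, one_mul, sum_mul]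
    _ ≤ 2 ^ (m - 1) * c := by gcongr

theorem IsLowerTriangular.sum_abs_col_le_two_pow_mul (hM : M.IsLowerTriangular)
    (hdiag : ∀ i, |M i i| ≤ c) (hoff : ∀ i j, j < i → |M i j| ≤ 2 ^ (i - j - 1 : ℕ) * c)
    (j : Fin m) :
    ∑ i, |M i j| ≤ 2 ^ (m - 1) * c := by
  have hc : 0 ≤ c := (abs_nonneg _).trans (hdiag j)
  have hgeom : (1 + ∑ i ∈ Ioi j, 2 ^ (i - j - 1 : ℕ) : 𝕜) ≤ 2 ^ (m - 1) := by
    have := Nat.sum_two_pow_lt_of_injOn (s := Ioi j) (g := fun i => i - j - 1) (n := m - 1)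
      (fun a ha b hb hab => by simp only [coe_Ioi, Set.mem_Ioi] at ha hb hab; omega)
      (fun i hi => by have := (mem_Ioi.mp hi); omega)
    exact_mod_cast (add_comm _ _).trans_le this
  calc ∑ i, |M i j| = ∑ i ∈ Ici j, |M i j| := by
        refine (sum_subset (subset_univ _) fun i _ hi => ?_).symm
        rw [hM.apply_eq_zero_of_lt (not_le.mp (mem_Ici.not.mp hi)), abs_zero]
    _ = |M j j| + ∑ i ∈ Ioi j, |M i j| := by rw [← Ioi_insert, sum_insert notMem_Ioi_self]
    _ ≤ c + ∑ i ∈ Ioi j, 2 ^ (i - j - 1 : ℕ) * c :=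
        add_le_add (hdiag j) (sum_le_sum fun i hi => hoff i j (mem_Ioi.mp hi))
    _ = (1 + ∑ i ∈ Ioi j, 2 ^ (i - j - 1 : ℕ)) * c := by rw [add_mul, one_mul, sum_mul]
    _ ≤ 2 ^ (m - 1) * c := by gcongr

end GeometricBounds

end Matrix

theorem inv_lowerTriangular_colDominant_bound_general {m : ℕ}
    (L : Matrix (Fin m) (Fin m) ℝ)
    (htri : ∀ i j : Fin m, i < j → L i j = 0)
    (hinv : IsUnit L.det)
    (hcol : ∀ i j : Fin m, j ≤ i → |L i j| ≤ |L j j|) :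
    specNorm L⁻¹ ≤ 2 ^ (m - 1) / ⨅ j : Fin m, |L j j| := by
  have hL : L.IsLowerTriangular := fun i j h => htri i j h
  set d := ⨅ j : Fin m, |L j j|
  have hd : 0 ≤ d := Real.iInf_nonneg fun j => abs_nonneg _
  have hdiag (i : Fin m) : |L⁻¹ i i| ≤ d⁻¹ := by
    have : Nonempty (Fin m) := ⟨i⟩
    obtain ⟨j, hj⟩ := exists_eq_ciInf_of_finite (f := fun j => |L j j|)
    rw [hL.inv_apply_self hinv, abs_inv]
    exact inv_anti₀ ((abs_pos.mpr (hL.apply_self_ne_zero hinv j)).trans_eq hj)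
      (ciInf_le (Finite.bddBelow_range _) i)
  have hoff (i j : Fin m) (hji : j < i) : |L⁻¹ i j| ≤ 2 ^ (i - j - 1 : ℕ) * d⁻¹ := by
    have hrec : ∀ k < i, |L⁻¹ i k| ≤ ∑ l ∈ Ioc k i, |L⁻¹ i l| := fun k hk =>
      hL.abs_inv_apply_le_sum_Ioc hinv (fun l hl => hcol l k hl) hk
    calc |L⁻¹ i j| ≤ 2 ^ #(Ioo j i) * |L⁻¹ i i| := le_two_pow_card_Ioo_mul hrec hji
      _ ≤ 2 ^ (i - j - 1 : ℕ) * d⁻¹ := by rw [Fin.card_Ioo]; gcongr; exact hdiag i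
  have hM := hL.inv hinv
  calc specNorm L⁻¹ ≤ √((2 ^ (m - 1) * d⁻¹) * (2 ^ (m - 1) * d⁻¹)) :=
        specNorm_le_sqrt_mul (by positivity) (hM.sum_abs_row_le_two_pow_mul hdiag hoff)
          (hM.sum_abs_col_le_two_pow_mul hdiag hoff)
    _ = 2 ^ (m - 1) / d := by rw [Real.sqrt_mul_self (by positivity), div_eq_mul_inv]

/-- For an invertible lower triangular matrix `L` whose diagonal entries
dominate their columns in absolute value, `‖L⁻¹‖ ≤ 2^(m-1) / min_j |l_jj|`. -/
theorem inv_lowerTriangular_colDominant_bound {m : ℕ} (hm : 0 < m)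
    (L : Matrix (Fin m) (Fin m) ℝ)
    (htri : ∀ i j : Fin m, i < j → L i j = 0)
    (hinv : IsUnit L.det)
    (hcol : ∀ i j : Fin m, j ≤ i → |L i j| ≤ |L j j|) :
    specNorm L⁻¹ ≤ 2 ^ (m - 1) / ⨅ j : Fin m, |L j j| :=
  inv_lowerTriangular_colDominant_bound_general L htri hinv hcol
end

section
/- Let L ∈ ℝ^{(m+1)×(m+1)} be lower triangular with |l_{ij}| ≤ |l_{jj}| for all i ≥ j. Then ‖L^{-1}‖_{∞→1} ≤ (2^{m+1} − 1) / min_j |l_{jj}|, where ‖B‖_{∞→1} = sup_{x≠0} ‖Bx‖₁/‖x‖_∞. -/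
/-!
Forward substitution for `L y = x` gives `l_ii y_i = x_i - ∑_{j<i} l_ij y_j`. Since the diagonal
dominates its column, `|l_ij y_j| ≤ |l_jj y_j|`, so by strong induction
`|l_ii y_i| ≤ (1 + ∑_{j<i} 2^j) ‖x‖_∞ = 2^i ‖x‖_∞`. Dividing by `min_j |l_jj|` and summing the
geometric series over `i ≤ m` bounds `‖L⁻¹ x‖₁` by `(2^(m+1) - 1) ‖x‖_∞ / min_j |l_jj|`.
-/

/-- The `∞ → 1` operator norm: `‖B‖_{∞→1} = sup_{x ≠ 0} ‖Bx‖₁ / ‖x‖_∞`. -/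
noncomputable def normInfToOne {n m : ℕ} (B : Matrix (Fin n) (Fin m) ℝ) : ℝ :=
  ⨆ x : {x : Fin m → ℝ // x ≠ 0}, (∑ i, |B.mulVec x.1 i|) / (⨆ j, |x.1 j|)

open Finset Matrix

theorem Fin.sum_Iio_two_pow {n : ℕ} (i : Fin n) :
    ∑ j ∈ Iio i, (2 : ℝ) ^ (j : ℕ) = 2 ^ (i : ℕ) - 1 := by
  have h := sum_map (Iio i) Fin.valEmbedding fun k => (2 : ℝ) ^ k
  rw [Fin.map_valEmbedding_Iio, Nat.Iio_eq_range, geom_sum_eq (by norm_num)] at h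
  simp only [Fin.valEmbedding_apply] at h
  rw [← h]
  norm_num

theorem Fin.sum_two_pow (n : ℕ) : ∑ i : Fin n, (2 : ℝ) ^ (i : ℕ) = 2 ^ n - 1 := by
  rw [Fin.sum_univ_eq_sum_range (fun k => (2 : ℝ) ^ k), geom_sum_eq (by norm_num)]
  norm_num

namespace Matrix.IsLowerTriangular

variable {ι R : Type*} [Fintype ι] [LinearOrder ι]

theorem mulVec_apply [LocallyFiniteOrderBot ι] [NonUnitalNonAssocSemiring R]
    {L : Matrix ι ι R} (hL : L.IsLowerTriangular) (y : ι → R) (i : ι) :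
    (L *ᵥ y) i = L i i * y i + ∑ j ∈ Iio i, L i j * y j := by
  classical
  rw [mulVec, dotProduct, ← sum_subset (subset_univ (Iic i)), ← Iio_insert,
    sum_insert notMem_Iio_self]
  intro j _ hj
  rw [hL (by simpa using hj), zero_mul]

theorem isUnit_diag [DecidableEq ι] [CommRing R] {L : Matrix ι ι R}
    (hL : L.IsLowerTriangular) (h : IsUnit L.det) (i : ι) : IsUnit (L i i) := by
  rw [det_of_isLowerTriangular L hL] at h
  exact IsUnit.prod_univ_iff.mp h i

end Matrix.IsLowerTriangular

section ForwardSubstitution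

variable {n : ℕ} {L : Matrix (Fin n) (Fin n) ℝ}

theorem abs_diag_mul_abs_le_two_pow (hL : L.IsLowerTriangular)
    (hcol : ∀ i j, j ≤ i → |L i j| ≤ |L j j|) {y : Fin n → ℝ} {M : ℝ}
    (hM : ∀ i, |(L *ᵥ y) i| ≤ M) (i : Fin n) :
    |L i i| * |y i| ≤ 2 ^ (i : ℕ) * M := by
  induction i using WellFoundedLT.induction with
  | _ i ih =>
  calc |L i i| * |y i| = |(L *ᵥ y) i - ∑ j ∈ Iio i, L i j * y j| := by
        rw [hL.mulVec_apply, add_sub_cancel_right, abs_mul]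
    _ ≤ M + ∑ j ∈ Iio i, |L i j * y j| :=
        (abs_sub _ _).trans (add_le_add (hM i) (abs_sum_le_sum_abs _ _))
    _ ≤ M + ∑ j ∈ Iio i, 2 ^ (j : ℕ) * M := by
        gcongr with j hj
        have hji : j < i := mem_Iio.mp hj
        rw [abs_mul]
        exact (mul_le_mul_of_nonneg_right (hcol i j hji.le) (abs_nonneg _)).trans (ih j hji)
    _ = 2 ^ (i : ℕ) * M := by
        rw [← sum_mul, Fin.sum_Iio_two_pow]
        ring

theorem sum_abs_le_of_diag_ge (hL : L.IsLowerTriangular)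
    (hcol : ∀ i j, j ≤ i → |L i j| ≤ |L j j|) {δ : ℝ} (hδ : 0 < δ) (hδL : ∀ i, δ ≤ |L i i|)
    {y : Fin n → ℝ} {M : ℝ} (hM : ∀ i, |(L *ᵥ y) i| ≤ M) :
    ∑ i, |y i| ≤ (2 ^ n - 1) / δ * M := by
  have hy : ∀ i, |y i| ≤ 2 ^ (i : ℕ) * M / δ := fun i => by
    rw [le_div_iff₀ hδ, mul_comm]
    exact (mul_le_mul_of_nonneg_right (hδL i) (abs_nonneg _)).trans
      (abs_diag_mul_abs_le_two_pow hL hcol hM i)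
  calc ∑ i, |y i| ≤ ∑ i : Fin n, 2 ^ (i : ℕ) * M / δ := sum_le_sum fun i _ => hy i
    _ = (2 ^ n - 1) / δ * M := by
        rw [← sum_div, ← sum_mul, Fin.sum_two_pow]
        ring

end ForwardSubstitution

theorem normInfToOne_le {n m : ℕ} {B : Matrix (Fin n) (Fin m) ℝ} {C : ℝ} (hC : 0 ≤ C)
    (h : ∀ x, ∑ i, |(B *ᵥ x) i| ≤ C * ⨆ j, |x j|) : normInfToOne B ≤ C := by
  refine Real.iSup_le (fun ⟨x, hx⟩ => ?_) hC
  obtain ⟨j, hj⟩ := Function.ne_iff.mp hx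
  have hpos : 0 < ⨆ j, |x j| :=
    (abs_pos.mpr hj).trans_le (le_ciSup (f := fun j => |x j|) (Set.finite_range _).bddAbove j)
  exact (div_le_iff₀ hpos).mpr (h x)

/-- For a lower triangular `(m+1) × (m+1)` matrix `L` whose diagonal entries
dominate their columns in absolute value,
`‖L⁻¹‖_{∞→1} ≤ (2^(m+1) − 1) / min_j |l_jj|`. -/
theorem normInfToOne_inv_lowerTriangular_bound {m : ℕ}
    (L : Matrix (Fin (m + 1)) (Fin (m + 1)) ℝ)
    (htri : ∀ i j : Fin (m + 1), i < j → L i j = 0)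
    (hinv : IsUnit L.det)
    (hcol : ∀ i j : Fin (m + 1), j ≤ i → |L i j| ≤ |L j j|) :
    normInfToOne L⁻¹ ≤ (2 ^ (m + 1) - 1) / ⨅ j : Fin (m + 1), |L j j| := by
  have hL : L.IsLowerTriangular := fun i j h => htri i j h
  obtain ⟨j₀, hj₀⟩ := exists_eq_ciInf_of_finite (f := fun j : Fin (m + 1) => |L j j|)
  have hδ : 0 < ⨅ j, |L j j| := hj₀ ▸ abs_pos.mpr (hL.isUnit_diag hinv j₀).ne_zero
  refine normInfToOne_le (div_nonneg (sub_nonneg.mpr (one_le_pow₀ one_le_two)) hδ.le)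
    fun x => sum_abs_le_of_diag_ge hL hcol hδ
      (fun i => ciInf_le (f := fun j => |L j j|) (Set.finite_range _).bddBelow i) fun i => ?_
  rw [mulVec_mulVec, mul_nonsing_inv L hinv, one_mulVec]
  exact le_ciSup (f := fun j => |x j|) (Set.finite_range _).bddAbove i
end

section
/- For any invertible matrix A ∈ ℝ^{n×n}, the minimal max-norm of a perturbation E making A + E singular equals ‖A^{-1}‖_{∞→1}^{-1}; that is, γ_{n-1}(A) := min{‖E‖_max : rank(A+E) ≤ n−1} = ‖A^{-1}‖_{∞→1}^{-1}. -/
/-- The entrywise maximum norm of a matrix. -/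
noncomputable def maxNorm {n m : ℕ} (E : Matrix (Fin n) (Fin m) ℝ) : ℝ :=
  ⨆ i, ⨆ j, |E i j|

/-- The approximation numbers: `γ_k(A) = min {‖E‖_max : rank (A + E) ≤ k}`. -/
noncomputable def gammaAp {n : ℕ} (A : Matrix (Fin n) (Fin n) ℝ) (k : ℕ) : ℝ :=
  sInf {c | ∃ E : Matrix (Fin n) (Fin n) ℝ, (A + E).rank ≤ k ∧ c = maxNorm E}

/-!
If `(A + E) x = 0` with `x ≠ 0`, then `x = -A⁻¹ E x`, so
`‖x‖₁ ≤ ‖A⁻¹‖_{∞→1} ‖E x‖_∞ ≤ ‖A⁻¹‖_{∞→1} ‖E‖_max ‖x‖₁`, which bounds `‖E‖_max` from below.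
Conversely, by duality with sign vectors the `∞ → 1` norm is attained at a vector `s` with
entries in `{-1, 0, 1}`, and a rank-one perturbation built from `s` and the signs of `A⁻¹ s`
makes `A` singular at exactly that cost.
-/

open Matrix Finset

section Norms

variable {n m : ℕ}

lemma iSup_abs_eq_norm (x : Fin m → ℝ) : ⨆ j, |x j| = ‖x‖ :=
  le_antisymm (Real.iSup_le (norm_le_pi_norm x) (norm_nonneg x))
    ((pi_norm_le_iff_of_nonneg (Real.iSup_nonneg fun _ => abs_nonneg _)).2
      fun j => le_ciSup (f := fun j => |x j|) (Finite.bddAbove_range _) j)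

lemma maxNorm_nonneg (E : Matrix (Fin n) (Fin m) ℝ) : 0 ≤ maxNorm E :=
  Real.iSup_nonneg fun _ => Real.iSup_nonneg fun _ => abs_nonneg _

lemma abs_le_maxNorm (E : Matrix (Fin n) (Fin m) ℝ) (i : Fin n) (j : Fin m) :
    |E i j| ≤ maxNorm E :=
  (le_ciSup (f := fun j => |E i j|) (Finite.bddAbove_range _) j).trans
    (le_ciSup (f := fun i => ⨆ j, |E i j|) (Finite.bddAbove_range _) i)

lemma maxNorm_le {E : Matrix (Fin n) (Fin m) ℝ} {c : ℝ} (hc : 0 ≤ c)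
    (h : ∀ i j, |E i j| ≤ c) : maxNorm E ≤ c :=
  Real.iSup_le (fun i => Real.iSup_le (h i) hc) hc

lemma abs_mulVec_le_sum (B : Matrix (Fin n) (Fin m) ℝ) (x : Fin m → ℝ) (i : Fin n) :
    |(B *ᵥ x) i| ≤ ∑ j, |B i j| * |x j| := by
  simpa only [mulVec, dotProduct, abs_mul] using abs_sum_le_sum_abs (fun j => B i j * x j) univ

lemma norm_mulVec_le_maxNorm_mul (E : Matrix (Fin n) (Fin m) ℝ) (x : Fin m → ℝ) :
    ‖E *ᵥ x‖ ≤ maxNorm E * ∑ j, |x j| := by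
  refine (pi_norm_le_iff_of_nonneg (by positivity [maxNorm_nonneg E])).2 fun i => ?_
  rw [Real.norm_eq_abs, mul_sum]
  exact (abs_mulVec_le_sum E x i).trans
    (sum_le_sum fun j _ => mul_le_mul_of_nonneg_right (abs_le_maxNorm E i j) (abs_nonneg _))

lemma sum_abs_mulVec_le (B : Matrix (Fin n) (Fin m) ℝ) (x : Fin m → ℝ) :
    ∑ i, |(B *ᵥ x) i| ≤ (∑ i, ∑ j, |B i j|) * ‖x‖ := by
  rw [sum_mul]
  refine sum_le_sum fun i _ => (abs_mulVec_le_sum B x i).trans ?_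
  rw [sum_mul]
  exact sum_le_sum fun j _ => mul_le_mul_of_nonneg_left (norm_le_pi_norm x j) (abs_nonneg _)

lemma normInfToOne_eq_iSup (B : Matrix (Fin n) (Fin m) ℝ) :
    normInfToOne B = ⨆ x : {x : Fin m → ℝ // x ≠ 0}, (∑ i, |(B *ᵥ x.1) i|) / ‖x.1‖ := by
  simp only [normInfToOne, iSup_abs_eq_norm]

lemma normInfToOne_nonneg (B : Matrix (Fin n) (Fin m) ℝ) : 0 ≤ normInfToOne B :=
  Real.iSup_nonneg fun _ => div_nonneg (sum_nonneg fun _ _ => abs_nonneg _)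
    (Real.iSup_nonneg fun _ => abs_nonneg _)

lemma sum_abs_mulVec_le_normInfToOne_mul (B : Matrix (Fin n) (Fin m) ℝ) (x : Fin m → ℝ) :
    ∑ i, |(B *ᵥ x) i| ≤ normInfToOne B * ‖x‖ := by
  rcases eq_or_ne x 0 with rfl | hx
  · simp
  rw [← div_le_iff₀ (norm_pos_iff.2 hx), normInfToOne_eq_iSup]
  refine le_ciSup (f := fun x : {x : Fin m → ℝ // x ≠ 0} => (∑ i, |(B *ᵥ x.1) i|) / ‖x.1‖)
    ⟨∑ i, ∑ j, |B i j|, ?_⟩ ⟨x, hx⟩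
  rintro _ ⟨y, rfl⟩
  exact (div_le_iff₀ (norm_pos_iff.2 y.2)).2 (sum_abs_mulVec_le B y.1)

end Norms

section SignVectors

variable {n m : ℕ}

lemma abs_coe_signType_le_one (ε : SignType) : |(ε : ℝ)| ≤ 1 := by
  cases ε <;> simp

lemma norm_coe_signType_le_one (ε : Fin m → SignType) : ‖fun j => (ε j : ℝ)‖ ≤ 1 :=
  (pi_norm_le_iff_of_nonneg zero_le_one).2 fun j => abs_coe_signType_le_one (ε j)

lemma sign_dotProduct_self (y : Fin m → ℝ) :
    (fun j => (SignType.sign (y j) : ℝ)) ⬝ᵥ y = ∑ j, |y j| :=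
  sum_congr rfl fun j _ => sign_mul_self (y j)

lemma dotProduct_le_sum_abs_mul_norm (v x : Fin m → ℝ) : v ⬝ᵥ x ≤ (∑ j, |v j|) * ‖x‖ := by
  rw [dotProduct, sum_mul]
  exact sum_le_sum fun j _ => (le_abs_self _).trans
    (by rw [abs_mul]; exact mul_le_mul_of_nonneg_left (norm_le_pi_norm x j) (abs_nonneg _))

/-- Duality: `‖Bx‖₁ = tᵀBx ≤ ‖Bᵀt‖₁ ‖x‖_∞` with `t = sign (Bx)`, and `‖Bᵀt‖₁ = tᵀBε ≤ ‖Bε‖₁`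
with `ε = sign (Bᵀt)`. -/
lemma exists_signType_sum_abs_mulVec_le (B : Matrix (Fin n) (Fin m) ℝ) (x : Fin m → ℝ) :
    ∃ ε : Fin m → SignType,
      ∑ i, |(B *ᵥ x) i| ≤ (∑ i, |(B *ᵥ fun j => (ε j : ℝ)) i|) * ‖x‖ := by
  set t : Fin n → ℝ := fun i => SignType.sign ((B *ᵥ x) i)
  set u := t ᵥ* B
  refine ⟨fun j => SignType.sign (u j), ?_⟩
  have hu : ∑ j, |u j| ≤ ∑ i, |(B *ᵥ fun j => (SignType.sign (u j) : ℝ)) i| := calc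
    ∑ j, |u j| = t ⬝ᵥ B *ᵥ fun j => (SignType.sign (u j) : ℝ) := by
      rw [dotProduct_mulVec, dotProduct_comm, sign_dotProduct_self]
    _ ≤ _ := by
      rw [dotProduct_comm]
      exact (dotProduct_le_sum_abs_mul_norm _ t).trans
        (mul_le_of_le_one_right (sum_nonneg fun _ _ => abs_nonneg _) (norm_coe_signType_le_one _))
  calc ∑ i, |(B *ᵥ x) i| = u ⬝ᵥ x := by rw [← sign_dotProduct_self, dotProduct_mulVec]
    _ ≤ (∑ j, |u j|) * ‖x‖ := dotProduct_le_sum_abs_mul_norm u x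
    _ ≤ _ := mul_le_mul_of_nonneg_right hu (norm_nonneg x)

lemma exists_norm_le_one_normInfToOne_le (B : Matrix (Fin n) (Fin m) ℝ) :
    ∃ s : Fin m → ℝ, ‖s‖ ≤ 1 ∧ normInfToOne B ≤ ∑ i, |(B *ᵥ s) i| := by
  obtain ⟨ε₀, hε₀⟩ := Finite.exists_max fun ε : Fin m → SignType =>
    ∑ i, |(B *ᵥ fun j => (ε j : ℝ)) i|
  refine ⟨_, norm_coe_signType_le_one ε₀, ?_⟩
  rw [normInfToOne_eq_iSup]
  refine Real.iSup_le (fun x => ?_) (sum_nonneg fun _ _ => abs_nonneg _)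
  obtain ⟨ε, hε⟩ := exists_signType_sum_abs_mulVec_le B x.1
  rw [div_le_iff₀ (norm_pos_iff.2 x.2)]
  exact hε.trans (mul_le_mul_of_nonneg_right (hε₀ ε) (norm_nonneg _))

end SignVectors

lemma Matrix.rank_le_card_sub_one_iff_det_eq_zero {K : Type*} [Field K] {n : ℕ} (hn : 0 < n)
    (M : Matrix (Fin n) (Fin n) K) : M.rank ≤ n - 1 ↔ M.det = 0 := by
  constructor
  · intro hM
    by_contra hdet
    have := M.rank_of_det_ne_zero hdet
    simp only [Fintype.card_fin] at this
    omega
  · intro hdet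
    obtain ⟨v, hv, hMv⟩ := exists_mulVec_eq_zero_iff.2 hdet
    have hker : 0 < Module.finrank K (LinearMap.ker M.mulVecLin) :=
      Module.finrank_pos_iff_exists_ne_zero.2 ⟨⟨v, hMv⟩, fun h => hv (congrArg Subtype.val h)⟩
    have := LinearMap.finrank_range_add_finrank_ker M.mulVecLin
    rw [Module.finrank_fin_fun] at this
    rw [rank]
    omega

section Perturbation

variable {n : ℕ} {A : Matrix (Fin n) (Fin n) ℝ}

lemma one_le_normInfToOne_inv_mul_maxNorm (hA : IsUnit A.det) {E : Matrix (Fin n) (Fin n) ℝ}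
    (hdet : (A + E).det = 0) : 1 ≤ normInfToOne A⁻¹ * maxNorm E := by
  obtain ⟨x, hx, hAEx⟩ := exists_mulVec_eq_zero_iff.2 hdet
  have hx_eq : x = -(A⁻¹ *ᵥ E *ᵥ x) := by
    rw [add_mulVec, add_eq_zero_iff_eq_neg] at hAEx
    rw [← mulVec_neg, ← hAEx, mulVec_mulVec, nonsing_inv_mul A hA, one_mulVec]
  have hx_pos : 0 < ∑ j, |x j| := by
    obtain ⟨j, hj⟩ := Function.ne_iff.1 hx
    exact sum_pos' (fun _ _ => abs_nonneg _) ⟨j, mem_univ j, abs_pos.2 hj⟩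
  refine le_of_mul_le_mul_right ?_ hx_pos
  calc 1 * ∑ j, |x j| = ∑ j, |(A⁻¹ *ᵥ E *ᵥ x) j| := by
        conv_lhs => rw [hx_eq]
        simp only [one_mul, Pi.neg_apply, abs_neg]
    _ ≤ normInfToOne A⁻¹ * ‖E *ᵥ x‖ := sum_abs_mulVec_le_normInfToOne_mul _ _
    _ ≤ normInfToOne A⁻¹ * (maxNorm E * ∑ j, |x j|) := by
        gcongr
        · exact normInfToOne_nonneg _
        · exact norm_mulVec_le_maxNorm_mul E x
    _ = _ := by ring

lemma normInfToOne_inv_pos (hA : IsUnit A.det) (hn : 0 < n) : 0 < normInfToOne A⁻¹ := by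
  have : Nonempty (Fin n) := Fin.pos_iff_nonempty.1 hn
  have hdet : (A + -A).det = 0 := by rw [add_neg_cancel, det_zero]
  have h := one_le_normInfToOne_inv_mul_maxNorm hA hdet
  refine (normInfToOne_nonneg _).lt_of_ne fun h0 => ?_
  rw [← h0, zero_mul] at h
  exact one_pos.not_ge h

/-- With `‖A⁻¹ s‖₁ ≥ ‖A⁻¹‖_{∞→1}`, `y = A⁻¹ s` and `t = sign y`, the rank-one perturbation
`E = -s tᵀ / ‖y‖₁` satisfies `E y = -s = -A y`. -/
lemma exists_det_add_eq_zero_maxNorm_le (hA : IsUnit A.det) (hM : 0 < normInfToOne A⁻¹) :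
    ∃ E : Matrix (Fin n) (Fin n) ℝ, (A + E).det = 0 ∧ maxNorm E ≤ (normInfToOne A⁻¹)⁻¹ := by
  obtain ⟨s, hs, hsM⟩ := exists_norm_le_one_normInfToOne_le A⁻¹
  set y := A⁻¹ *ᵥ s
  set μ := ∑ i, |y i|
  have hμ : 0 < μ := hM.trans_le hsM
  set t : Fin n → ℝ := fun i => SignType.sign (y i)
  set E : Matrix (Fin n) (Fin n) ℝ := of fun i j => -(s i * t j) / μ
  have hAy : A *ᵥ y = s := by rw [mulVec_mulVec, mul_nonsing_inv A hA, one_mulVec]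
  have hEy : E *ᵥ y = -s := by
    ext i
    calc (E *ᵥ y) i = -s i / μ * (t ⬝ᵥ y) := by
          simp only [E, mulVec, dotProduct, of_apply, mul_sum]
          exact sum_congr rfl fun j _ => by ring
      _ = -s i := by rw [sign_dotProduct_self]; exact div_mul_cancel₀ _ hμ.ne'
  refine ⟨E, exists_mulVec_eq_zero_iff.1 ⟨y, fun hy => ?_, ?_⟩, ?_⟩
  · simp [μ, hy] at hμ
  · rw [add_mulVec, hAy, hEy, add_neg_cancel]
  · refine maxNorm_le (inv_nonneg.2 hM.le) fun i j => ?_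
    calc |E i j| = |s i| * |t j| / μ := by simp [E, abs_div, abs_of_pos hμ]
      _ ≤ 1 * 1 / μ := by
          gcongr
          · exact (norm_le_pi_norm s i).trans hs
          · exact abs_coe_signType_le_one _
      _ = μ⁻¹ := by rw [mul_one, one_div]
      _ ≤ (normInfToOne A⁻¹)⁻¹ := inv_anti₀ hM hsM

end Perturbation

/-- For an invertible `A`, the minimal max-norm of a perturbation making `A`
singular equals `‖A⁻¹‖_{∞→1}⁻¹`: `γ_{n-1}(A) = ‖A⁻¹‖_{∞→1}⁻¹`. -/
theorem gamma_eq_inv_normInfToOne {n : ℕ} (A : Matrix (Fin n) (Fin n) ℝ)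
    (hA : IsUnit A.det) :
    gammaAp A (n - 1) = (normInfToOne A⁻¹)⁻¹ := by
  rcases Nat.eq_zero_or_pos n with rfl | hn
  · have hrank (E : Matrix (Fin 0) (Fin 0) ℝ) : (A + E).rank = 0 := by
      simpa using (A + E).rank_le_card_width
    simp [gammaAp, maxNorm, normInfToOne, hrank]
  have hM := normInfToOne_inv_pos hA hn
  have hrank (E : Matrix (Fin n) (Fin n) ℝ) := rank_le_card_sub_one_iff_det_eq_zero hn (A + E)
  have lower (E : Matrix (Fin n) (Fin n) ℝ) (hE : (A + E).rank ≤ n - 1) :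
      (normInfToOne A⁻¹)⁻¹ ≤ maxNorm E :=
    (inv_le_iff_one_le_mul₀' hM).2 (one_le_normInfToOne_inv_mul_maxNorm hA ((hrank E).1 hE))
  obtain ⟨E, hdet, hE⟩ := exists_det_add_eq_zero_maxNorm_le hA hM
  have hE_rank := (hrank E).2 hdet
  refine IsLeast.csInf_eq ⟨⟨E, hE_rank, (hE.antisymm (lower E hE_rank)).symm⟩, ?_⟩
  rintro _ ⟨F, hF, rfl⟩
  exact lower F hF
end

section
/- Let A ∈ ℝ^{(m+1)×(m+1)} be invertible with LU factorization A = L₁₁U₁₁ produced by Gaussian elimination with complete pivoting (no further permutations needed), with pivots p₁,…,p_{m+1}. Then min{|p₁|,…,|p_{m+1}|} ≤ 4^m · σ_{m+1}(A), where σ_{m+1}(A) is the smallest singular value of A. -/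
/-- The singular values of a real matrix: square roots of the eigenvalues of `AᴴA`. -/
noncomputable def svals {n m : ℕ} (A : Matrix (Fin n) (Fin m) ℝ) : Fin m → ℝ :=
  fun i => Real.sqrt ((Matrix.isHermitian_conjTranspose_mul_self A).eigenvalues i)

/-- `sigma A k` is the `k`-th largest singular value of `A` (1-indexed). -/
noncomputable def sigma {n : ℕ} (A : Matrix (Fin n) (Fin n) ℝ) (k : ℕ) : ℝ :=
  (Multiset.sort (Multiset.map (svals A) Finset.univ.val) (· ≤ ·)).getD (n - k) 0

/-!
All norms of matrices are Frobenius norms. Write `A⁻¹ = U⁻¹ L⁻¹`. Solving `L V = 1` row by row,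
the dominance of the diagonal of a lower triangular `L` in each column gives
`|L i i| |V i j| ≤ 2 ^ (i - j - 1)` below the diagonal and `≤ 1` on it, and the squares of these
bounds sum to at most `4 ^ m`. Hence `‖L⁻¹‖ ≤ 2 ^ m / minⱼ |L j j|` and, applied to `Uᵀ`,
`‖U⁻¹‖ ≤ 2 ^ m`. Finally every singular value `σ` of `A` satisfies `1 ≤ ‖A⁻¹‖ σ`: apply `A⁻¹` to
`A v` for a unit eigenvector `v` of `AᵀA`, for which `‖A v‖ = σ`.
-/

open Finset Matrix WithLp

attribute [local instance] Matrix.frobeniusNormedAddCommGroup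

theorem Matrix.frobenius_norm_sq {m n : Type*} [Fintype m] [Fintype n] (M : Matrix m n ℝ) :
    ‖M‖ ^ 2 = ∑ i, ∑ j, M i j ^ 2 := by
  rw [frobenius_norm_def, ← Real.rpow_natCast, ← Real.rpow_mul (by positivity)]
  norm_num

theorem Matrix.norm_toLp_mulVec_le {m n : Type*} [Fintype m] [Fintype n] (M : Matrix m n ℝ)
    (v : n → ℝ) : ‖toLp 2 (M *ᵥ v)‖ ≤ ‖M‖ * ‖toLp 2 v‖ := by
  have h := frobenius_norm_mul M (replicateCol Unit v)
  rwa [← replicateCol_mulVec, frobenius_norm_replicateCol, frobenius_norm_replicateCol] at h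

theorem svals_eq_norm_mulVec_eigenvectorBasis {n m : ℕ} (A : Matrix (Fin n) (Fin m) ℝ)
    (i : Fin m) :
    svals A i = ‖toLp 2 (A *ᵥ (isHermitian_conjTranspose_mul_self A).eigenvectorBasis i)‖ := by
  have hquad (w : Fin m → ℝ) : w ⬝ᵥ (Aᴴ * A) *ᵥ w = ‖toLp 2 (A *ᵥ w)‖ ^ 2 := by
    rw [EuclideanSpace.norm_sq_eq, conjTranspose_eq_transpose_of_trivial, ← mulVec_mulVec,
      dotProduct_mulVec, vecMul_transpose]
    simp only [dotProduct, Real.norm_eq_abs, sq_abs, ← sq]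
  rw [svals, (isHermitian_conjTranspose_mul_self A).eigenvalues_eq i, RCLike.re_to_real,
    star_trivial, hquad, Real.sqrt_sq (norm_nonneg _)]

theorem one_le_norm_inv_mul_svals {n : ℕ} (A : Matrix (Fin n) (Fin n) ℝ) (hA : IsUnit A.det)
    (i : Fin n) : 1 ≤ ‖A⁻¹‖ * svals A i := by
  set v := (isHermitian_conjTranspose_mul_self A).eigenvectorBasis i
  calc (1 : ℝ) = ‖toLp 2 (A⁻¹ *ᵥ (A *ᵥ v))‖ := by
        rw [mulVec_mulVec, nonsing_inv_mul A hA, one_mulVec]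
        exact ((isHermitian_conjTranspose_mul_self A).eigenvectorBasis.orthonormal.1 i).symm
    _ ≤ ‖A⁻¹‖ * svals A i := by
        rw [svals_eq_norm_mulVec_eigenvectorBasis]
        exact norm_toLp_mulVec_le _ _

theorem sigma_mem_range_svals {n k : ℕ} (A : Matrix (Fin n) (Fin n) ℝ) (hk : 0 < k)
    (hkn : k ≤ n) : sigma A k ∈ Set.range (svals A) := by
  set l := Multiset.sort (Multiset.map (svals A) Finset.univ.val) (· ≤ ·)
  have hlen : n - k < l.length := by
    rw [Multiset.length_sort, Multiset.card_map, card_val, card_univ, Fintype.card_fin]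
    omega
  obtain ⟨i, -, hi⟩ := Multiset.mem_map.mp ((Multiset.mem_sort _).mp (List.getElem_mem hlen))
  exact ⟨i, by rw [sigma, List.getD_eq_getElem _ _ hlen, hi]⟩

noncomputable def lowerTriInvBound (i j : ℕ) : ℝ :=
  if i < j then 0 else if i = j then 1 else 2 ^ (i - j - 1)

theorem lowerTriInvBound_eq_add_sum (i j : ℕ) :
    lowerTriInvBound i j = (if i = j then 1 else 0) + ∑ k ∈ range i, lowerTriInvBound k j := by
  induction i with
  | zero => rcases j with _ | j <;> simp [lowerTriInvBound]
  | succ i ih =>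
    rw [sum_range_succ, eq_sub_of_add_eq' ih.symm]
    unfold lowerTriInvBound
    split_ifs <;> try omega
    · norm_num
    · norm_num
    · rw [show i + 1 - j - 1 = 0 by omega]; norm_num
    · rw [show i + 1 - j - 1 = i - j - 1 + 1 by omega, pow_succ]; ring

theorem sum_sq_lowerTriInvBound_le (m : ℕ) :
    ∑ i ∈ range (m + 1), ∑ j ∈ range (m + 1), lowerTriInvBound i j ^ 2 ≤ 4 ^ m := by
  induction m with
  | zero => simp [lowerTriInvBound]
  | succ m ih =>
    have hcol : ∀ i ∈ range (m + 1), lowerTriInvBound i (m + 1) = 0 := fun i hi =>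
      if_pos (by simpa using hi)
    have hrow : ∑ j ∈ range (m + 2), lowerTriInvBound (m + 1) j ^ 2
        = ∑ t ∈ range (m + 1), (4 : ℝ) ^ t + 1 := by
      rw [sum_range_succ, ← sum_range_reflect]
      congr 1
      · refine sum_congr rfl fun t ht => ?_
        have ht : t < m + 1 := mem_range.mp ht
        rw [lowerTriInvBound, if_neg (by omega), if_neg (by omega),
          show m + 1 - (m + 1 - 1 - t) - 1 = t by omega, ← pow_mul, pow_mul']
        norm_num
      · simp [lowerTriInvBound]
    have hgeom : ∑ t ∈ range (m + 1), (4 : ℝ) ^ t = (4 ^ (m + 1) - 1) / 3 := by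
      rw [geom_sum_eq (by norm_num)]; norm_num
    have hold : ∑ i ∈ range (m + 1), ∑ j ∈ range (m + 2), lowerTriInvBound i j ^ 2
        = ∑ i ∈ range (m + 1), ∑ j ∈ range (m + 1), lowerTriInvBound i j ^ 2 :=
      sum_congr rfl fun i hi => by rw [sum_range_succ, hcol i hi, zero_pow two_ne_zero, add_zero]
    rw [sum_range_succ, hrow, hgeom, hold, pow_succ]
    linarith [one_le_pow₀ (M₀ := ℝ) (a := 4) (n := m) (by norm_num)]

theorem frobenius_norm_le_of_abs_le_lowerTriInvBound {m : ℕ}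
    (M : Matrix (Fin (m + 1)) (Fin (m + 1)) ℝ) {c : ℝ} (hc : 0 ≤ c)
    (hM : ∀ i j, |M i j| ≤ c * lowerTriInvBound i j) : ‖M‖ ≤ c * 2 ^ m := by
  refine (pow_le_pow_iff_left₀ (norm_nonneg M) (by positivity) two_ne_zero).mp ?_
  calc ‖M‖ ^ 2 = ∑ i, ∑ j, M i j ^ 2 := frobenius_norm_sq M
    _ ≤ ∑ i : Fin (m + 1), ∑ j : Fin (m + 1), c ^ 2 * lowerTriInvBound i j ^ 2 := by
        gcongr with i _ j _
        rw [← mul_pow, ← sq_abs]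
        exact pow_le_pow_left₀ (abs_nonneg _) (hM i j) 2
    _ = c ^ 2 * ∑ i ∈ range (m + 1), ∑ j ∈ range (m + 1), lowerTriInvBound i j ^ 2 := by
        rw [← Fin.sum_univ_eq_sum_range, mul_sum]
        exact sum_congr rfl fun i _ => by
          rw [← Fin.sum_univ_eq_sum_range (fun j => lowerTriInvBound i j ^ 2), mul_sum]
    _ ≤ c ^ 2 * 4 ^ m := by gcongr; exact sum_sq_lowerTriInvBound_le m
    _ = (c * 2 ^ m) ^ 2 := by rw [mul_pow, ← pow_mul, mul_comm m, pow_mul]; norm_num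

theorem abs_diag_mul_abs_le_lowerTriInvBound {n : ℕ} {L V : Matrix (Fin n) (Fin n) ℝ}
    (hLV : L * V = 1) (hL : L.IsLowerTriangular) (hLcol : ∀ i j, j ≤ i → |L i j| ≤ |L j j|)
    (i j : Fin n) : |L i i| * |V i j| ≤ lowerTriInvBound i j := by
  induction i using WellFoundedLT.induction with
  | _ i ih =>
  have hrow : L i i * V i j = (if i = j then 1 else 0) - ∑ k ∈ Iio i, L i k * V k j := by
    have h : ∑ k, L i k * V k j = (1 : Matrix (Fin n) (Fin n) ℝ) i j := by
      rw [← mul_apply, hLV]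
    rw [← sum_subset (subset_univ (Iic i)) fun k _ hk => by
        rw [hL (by simpa using hk), zero_mul],
      ← Iio_insert, sum_insert notMem_Iio_self, one_apply] at h
    linarith
  calc |L i i| * |V i j| = |L i i * V i j| := (abs_mul _ _).symm
    _ ≤ (if i = j then 1 else 0) + ∑ k ∈ Iio i, |L i k| * |V k j| := by
        rw [hrow]
        refine (abs_sub _ _).trans (add_le_add (by split_ifs <;> simp) ?_)
        simpa only [abs_mul] using abs_sum_le_sum_abs (fun k => L i k * V k j) (Iio i)
    _ ≤ (if i = j then 1 else 0) + ∑ k ∈ Iio i, lowerTriInvBound k j := by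
        gcongr with k hk
        exact (mul_le_mul_of_nonneg_right (hLcol i k (mem_Iio.mp hk).le) (abs_nonneg _)).trans
          (ih k (mem_Iio.mp hk))
    _ = lowerTriInvBound i j := by
        rw [lowerTriInvBound_eq_add_sum, ← Nat.Iio_eq_range, ← Fin.map_valEmbedding_Iio,
          sum_map]
        simp only [Fin.val_inj]
        rfl

theorem frobenius_norm_inv_le_of_isLowerTriangular {m : ℕ}
    {L : Matrix (Fin (m + 1)) (Fin (m + 1)) ℝ} (hdet : IsUnit L.det) (hL : L.IsLowerTriangular)
    (hLcol : ∀ i j, j ≤ i → |L i j| ≤ |L j j|) {p : ℝ} (hp : 0 < p) (hpL : ∀ i, p ≤ |L i i|) :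
    ‖L⁻¹‖ ≤ p⁻¹ * 2 ^ m :=
  frobenius_norm_le_of_abs_le_lowerTriInvBound L⁻¹ (inv_nonneg.mpr hp.le) fun i j => by
    rw [inv_mul_eq_div, le_div_iff₀ hp, mul_comm]
    exact (mul_le_mul_of_nonneg_right (hpL i) (abs_nonneg _)).trans
      (abs_diag_mul_abs_le_lowerTriInvBound (mul_nonsing_inv L hdet) hL hLcol i j)

theorem frobenius_norm_inv_le_of_isUpperTriangular {m : ℕ}
    {U : Matrix (Fin (m + 1)) (Fin (m + 1)) ℝ} (hU : U.IsUpperTriangular)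
    (hUdiag : ∀ i, U i i = 1) (hUrow : ∀ i j, |U i j| ≤ 1) : ‖U⁻¹‖ ≤ 2 ^ m := by
  have hdet : IsUnit Uᵀ.det := by simp [det_of_isUpperTriangular hU, hUdiag]
  have h := frobenius_norm_inv_le_of_isLowerTriangular hdet hU.transpose
    (fun i j _ => by simpa [hUdiag] using hUrow j i) one_pos fun i => by simp [hUdiag]
  rwa [← transpose_nonsing_inv, frobenius_norm_transpose, inv_one, one_mul] at h

theorem one_le_norm_inv_mul_sigma {n k : ℕ} (A : Matrix (Fin n) (Fin n) ℝ) (hA : IsUnit A.det)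
    (hk : 0 < k) (hkn : k ≤ n) : 1 ≤ ‖A⁻¹‖ * sigma A k := by
  obtain ⟨i, hi⟩ := sigma_mem_range_svals A hk hkn
  exact hi ▸ one_le_norm_inv_mul_svals A hA i

/-- For an invertible `(m+1) × (m+1)` matrix with LU factorization `A = L₁₁U₁₁`
produced by complete pivoting (so in `L₁₁` each diagonal entry, the pivot,
dominates its column, and `U₁₁` is unit upper triangular with entries bounded
by 1), the smallest pivot satisfies
`min{|p₁|,…,|p_{m+1}|} ≤ 4^m · σ_{m+1}(A)`. -/
theorem min_pivot_le_smallest_singularValue {m : ℕ}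
    (A L U : Matrix (Fin (m + 1)) (Fin (m + 1)) ℝ)
    (hinv : IsUnit A.det)
    (hLU : A = L * U)
    (hLtri : ∀ i j : Fin (m + 1), i < j → L i j = 0)
    (hLcol : ∀ i j : Fin (m + 1), j ≤ i → |L i j| ≤ |L j j|)
    (hUtri : ∀ i j : Fin (m + 1), j < i → U i j = 0)
    (hUdiag : ∀ i : Fin (m + 1), U i i = 1)
    (hUrow : ∀ i j : Fin (m + 1), |U i j| ≤ 1) :
    (⨅ j : Fin (m + 1), |L j j|) ≤ 4 ^ m * sigma A (m + 1) := by
  set p := ⨅ j : Fin (m + 1), |L j j|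
  have hLdet : IsUnit L.det := by
    rwa [hLU, det_mul, det_of_isUpperTriangular hUtri, prod_eq_one fun i _ => hUdiag i,
      mul_one] at hinv
  have hp : 0 < p := by
    obtain ⟨j, hj⟩ : ∃ j, |L j j| = p := exists_eq_ciInf_of_finite
    have hdiag : ∏ i, L i i ≠ 0 := det_of_isLowerTriangular L hLtri ▸ hLdet.ne_zero
    exact hj ▸ abs_pos.mpr (prod_ne_zero_iff.mp hdiag j (mem_univ j))
  have hAinv : ‖A⁻¹‖ ≤ 4 ^ m / p := calc
    ‖A⁻¹‖ ≤ ‖U⁻¹‖ * ‖L⁻¹‖ := by rw [hLU, Matrix.mul_inv_rev]; exact frobenius_norm_mul _ _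
    _ ≤ 2 ^ m * (p⁻¹ * 2 ^ m) :=
        mul_le_mul (frobenius_norm_inv_le_of_isUpperTriangular hUtri hUdiag hUrow)
          (frobenius_norm_inv_le_of_isLowerTriangular hLdet hLtri hLcol hp
            fun i => ciInf_le (Finite.bddBelow_range _) i)
          (norm_nonneg _) (by positivity)
    _ = 4 ^ m / p := by rw [show (4 : ℝ) = 2 * 2 by norm_num, mul_pow]; field_simp
  have hσ : 0 ≤ sigma A (m + 1) := by
    obtain ⟨i, hi⟩ := sigma_mem_range_svals A (Nat.succ_pos m) le_rfl
    exact hi ▸ Real.sqrt_nonneg _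
  calc p ≤ p * (‖A⁻¹‖ * sigma A (m + 1)) :=
        le_mul_of_one_le_right hp.le (one_le_norm_inv_mul_sigma A hinv (Nat.succ_pos m) le_rfl)
    _ ≤ p * (4 ^ m / p * sigma A (m + 1)) := by gcongr
    _ = 4 ^ m * sigma A (m + 1) := by field_simp
end
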